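/- arXiv:2101.06093 — 4 statements merged into one kernel-verified Lean document; each statement's English description precedes it below -/
import Mathlib

section
/- Let 0 < a < b < ∞, 0 < c < d < ∞, p, q > -1 and α, β > 0. If f : [a,b] × [c,d] → ℝ is continuous, then its mixed Katugampola fractional integral I f is continuous on [a,b] × [c,d]. -/
/-! The substitution `s ^ (p + 1) = a ^ (p + 1) + σ * (x ^ (p + 1) - a ^ (p + 1))` (the map
`rpowLerp (p + 1) a x`) turns `∫ s in a..x, (x ^ (p + 1) - s ^ (p + 1)) ^ (α - 1) * s ^ p * F s`
into `(x ^ (p + 1) - a ^ (p + 1)) ^ α / (p + 1) * ∫ σ in [0, 1], (1 - σ) ^ (α - 1) * F (s σ)`,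
so the moving singular endpoint becomes the fixed, integrable weight `(1 - σ) ^ (α - 1)`.
Substituting in both variables writes the mixed integral as continuous prefactors times an
integral over the fixed square `[0, 1]²` whose integrand is continuous in `(x, y)` and bounded by
a constant times that weight, so continuity follows by dominated convergence. -/

open MeasureTheory Set Filter
open scoped Classical

/-- Mixed (left-hand sided) Katugampola fractional integral of a bivariate function. -/
noncomputable def mixedKI (a c p q α β : ℝ) (f : ℝ → ℝ → ℝ) (x y : ℝ) : ℝ :=
  ((p + 1) ^ (1 - α) * (q + 1) ^ (1 - β) / (Real.Gamma α * Real.Gamma β)) *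
    ∫ s in a..x, ∫ t in c..y,
      (x ^ (p + 1) - s ^ (p + 1)) ^ (α - 1) * (y ^ (q + 1) - t ^ (q + 1)) ^ (β - 1)
        * s ^ p * t ^ q * f s t

/-- Univariate Katugampola fractional integral. -/
noncomputable def KI (a p α : ℝ) (g : ℝ → ℝ) (x : ℝ) : ℝ :=
  ((p + 1) ^ (1 - α) / Real.Gamma α) *
    ∫ t in a..x, (x ^ (p + 1) - t ^ (p + 1)) ^ (α - 1) * t ^ p * g t

/-- Bounded variation in the sense of Arzelà on `[a,b] × [c,d]`. -/
def ArzelaBV (a b c d : ℝ) (f : ℝ → ℝ → ℝ) : Prop :=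
  ∃ M > 0, ∀ (m : ℕ) (x y : ℕ → ℝ),
    x 0 = a → x m = b → y 0 = c → y m = d →
    (∀ i < m, x i ≤ x (i + 1)) → (∀ i < m, y i ≤ y (i + 1)) →
    ∑ i ∈ Finset.range m, |f (x (i + 1)) (y (i + 1)) - f (x i) (y i)| ≤ M

/-- A bounded bivariate function, monotone (nondecreasing) in each variable on the rectangle. -/
def MonotoneRect (a b c d : ℝ) (g : ℝ → ℝ → ℝ) : Prop :=
  (∃ M : ℝ, ∀ x ∈ Icc a b, ∀ y ∈ Icc c d, |g x y| ≤ M) ∧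
  (∀ x ∈ Icc a b, ∀ x' ∈ Icc a b, x ≤ x' → ∀ y ∈ Icc c d, g x y ≤ g x' y) ∧
  (∀ y ∈ Icc c d, ∀ y' ∈ Icc c d, y ≤ y' → ∀ x ∈ Icc a b, g x y ≤ g x y')

/-- Graph of a bivariate function over the rectangle `[a,b] × [c,d]`, as a subset of `ℝ³`. -/
def graphRect (a b c d : ℝ) (f : ℝ → ℝ → ℝ) : Set (ℝ × ℝ × ℝ) :=
  {p | p.1 ∈ Icc a b ∧ p.2.1 ∈ Icc c d ∧ p.2.2 = f p.1 p.2.1}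

/-- A cube of the standard `δ`-mesh of `ℝ³`. -/
def meshCube (δ : ℝ) (i j k : ℤ) : Set (ℝ × ℝ × ℝ) :=
  Icc (i * δ) ((i + 1) * δ) ×ˢ Icc (j * δ) ((j + 1) * δ) ×ˢ Icc (k * δ) ((k + 1) * δ)

/-- Number of `δ`-mesh cubes of `ℝ³` that intersect `S`. -/
noncomputable def meshCount (δ : ℝ) (S : Set (ℝ × ℝ × ℝ)) : ℕ :=
  Nat.card {p : ℤ × ℤ × ℤ | (meshCube δ p.1 p.2.1 p.2.2 ∩ S).Nonempty}

/-- Upper box (Minkowski) dimension of a subset of `ℝ³`. -/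
noncomputable def upperBoxDim (S : Set (ℝ × ℝ × ℝ)) : ℝ :=
  limsup (fun δ : ℝ => Real.log (meshCount δ S) / (-Real.log δ)) (nhdsWithin 0 (Ioi 0))

/-- Lower box (Minkowski) dimension of a subset of `ℝ³`. -/
noncomputable def lowerBoxDim (S : Set (ℝ × ℝ × ℝ)) : ℝ :=
  liminf (fun δ : ℝ => Real.log (meshCount δ S) / (-Real.log δ)) (nhdsWithin 0 (Ioi 0))

/-- Maximum range of `f` over a subset `A` of the plane. -/
noncomputable def Rf (f : ℝ → ℝ → ℝ) (A : Set (ℝ × ℝ)) : ℝ :=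
  sSup {r | ∃ p ∈ A, ∃ q ∈ A, r = |f p.1 p.2 - f q.1 q.2|}

/-- The `(i,j)`-th sub-rectangle of the `m × n` uniform partition of `[a,b] × [c,d]`. -/
def subRect (a b c d : ℝ) (m n : ℕ) (i j : ℕ) : Set (ℝ × ℝ) :=
  Icc (a + ((i : ℝ) - 1) * (b - a) / m) (a + (i : ℝ) * (b - a) / m) ×ˢ
    Icc (c + ((j : ℝ) - 1) * (d - c) / n) (c + (j : ℝ) * (d - c) / n)

/-- The sequence `a₀ = a`, `aₙ = a + (b-a)/2 + ⋯ + (b-a)/2ⁿ = b - (b-a)/2ⁿ`. -/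
noncomputable def aseq (a b : ℝ) (n : ℕ) : ℝ := b - (b - a) / 2 ^ n

/-- The affine map `ψₙ : [aₙ₋₁, aₙ] → [a₀, a₁]`. -/
noncomputable def psiN (a b : ℝ) (n : ℕ) (x : ℝ) : ℝ :=
  2 ^ n * ((aseq a b 1 - aseq a b 0) * x + aseq a b 0 * aseq a b n
    - aseq a b 1 * aseq a b (n - 1)) / (b - a)

/-- The function `Fₙ(x,y) = (1/n) φ(ψₙ(x), y) + ((n-1)/n) φ(a₀, y)` (for `n = 1` this is `φ`). -/
noncomputable def Fseq (a b : ℝ) (φ : ℝ → ℝ → ℝ) (n : ℕ) (x y : ℝ) : ℝ :=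
  (1 / (n : ℝ)) * φ (psiN a b n x) y + (((n : ℝ) - 1) / (n : ℝ)) * φ (aseq a b 0) y

noncomputable def rpowLerp (r a x σ : ℝ) : ℝ :=
  (a ^ r + σ * (x ^ r - a ^ r)) ^ r⁻¹

section rpowLerp

variable {r a x σ : ℝ}

lemma rpowLerp_base_pos (ha : 0 < a) (hx : 0 < x) (hσ : σ ∈ Icc (0 : ℝ) 1) :
    0 < a ^ r + σ * (x ^ r - a ^ r) := by
  have hA := Real.rpow_pos_of_pos ha r
  have hX := Real.rpow_pos_of_pos hx r
  rcases le_total (a ^ r) (x ^ r) with h | h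
  · nlinarith [mul_le_mul_of_nonneg_left h hσ.1]
  · nlinarith [mul_le_mul_of_nonneg_left h (sub_nonneg.2 hσ.2)]

lemma rpowLerp_zero (hr : r ≠ 0) (ha : 0 ≤ a) : rpowLerp r a x 0 = a := by
  simp [rpowLerp, Real.rpow_rpow_inv ha hr]

lemma rpowLerp_one (hr : r ≠ 0) (hx : 0 ≤ x) : rpowLerp r a x 1 = x := by
  simp [rpowLerp, Real.rpow_rpow_inv hx hr]

lemma rpowLerp_rpow (hr : r ≠ 0) (ha : 0 < a) (hx : 0 < x) (hσ : σ ∈ Icc (0 : ℝ) 1) :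
    rpowLerp r a x σ ^ r = a ^ r + σ * (x ^ r - a ^ r) :=
  Real.rpow_inv_rpow (rpowLerp_base_pos ha hx hσ).le hr

lemma continuousOn_rpowLerp (ha : 0 < a) :
    ContinuousOn (fun z : ℝ × ℝ => rpowLerp r a z.1 z.2) (Ioi 0 ×ˢ Icc 0 1) := by
  refine ContinuousOn.rpow_const ?_ fun z hz => Or.inl (rpowLerp_base_pos ha hz.1 hz.2).ne'
  exact continuousOn_const.add <| continuousOn_snd.mul <|
    (continuousOn_fst.rpow_const fun _ hz => Or.inl (ne_of_gt hz.1)).sub continuousOn_const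

lemma hasDerivAt_rpowLerp (ha : 0 < a) (hx : 0 < x) (hσ : σ ∈ Icc (0 : ℝ) 1) :
    HasDerivAt (rpowLerp r a x)
      ((x ^ r - a ^ r) * r⁻¹ * (a ^ r + σ * (x ^ r - a ^ r)) ^ (r⁻¹ - 1)) σ := by
  have hlin : HasDerivAt (fun σ : ℝ => a ^ r + σ * (x ^ r - a ^ r)) (x ^ r - a ^ r) σ := by
    simpa using ((hasDerivAt_id σ).mul_const (x ^ r - a ^ r)).const_add (a ^ r)
  exact (hlin.rpow_const (Or.inl (rpowLerp_base_pos ha hx hσ).ne')).congr_deriv (by ring)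

lemma strictMonoOn_rpowLerp (hr : 0 < r) (ha : 0 < a) (hax : a < x) :
    StrictMonoOn (rpowLerp r a x) (Icc 0 1) := by
  intro σ hσ τ hτ hστ
  have hΔ : 0 < x ^ r - a ^ r := sub_pos.2 (Real.rpow_lt_rpow ha.le hax hr)
  exact Real.rpow_lt_rpow (rpowLerp_base_pos ha (ha.trans hax) hσ).le
    (by nlinarith) (inv_pos.2 hr)

lemma image_rpowLerp_Icc (hr : 0 < r) (ha : 0 < a) (hax : a < x) :
    rpowLerp r a x '' Icc 0 1 = Icc a x := by
  have hcont : ContinuousOn (rpowLerp r a x) (Icc 0 1) :=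
    (continuousOn_rpowLerp ha).comp (continuousOn_const.prodMk continuousOn_id)
      fun σ hσ => ⟨ha.trans hax, hσ⟩
  rw [hcont.image_Icc_of_monotoneOn zero_le_one (strictMonoOn_rpowLerp hr ha hax).monotoneOn,
    rpowLerp_zero hr.ne' ha.le, rpowLerp_one hr.ne' (ha.trans hax).le]

lemma rpowLerp_mem_Icc (hr : 0 < r) (ha : 0 < a) (hax : a ≤ x) (hσ : σ ∈ Icc (0 : ℝ) 1) :
    rpowLerp r a x σ ∈ Icc a x := by
  rcases hax.eq_or_lt with rfl | hax
  · simp [rpowLerp, Real.rpow_rpow_inv ha.le hr.ne']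
  · exact image_rpowLerp_Icc hr ha hax ▸ mem_image_of_mem _ hσ

lemma mapsTo_rpowLerp {b : ℝ} (hr : 0 < r) (ha : 0 < a) :
    MapsTo (fun z : ℝ × ℝ => rpowLerp r a z.1 z.2) (Icc a b ×ˢ Icc 0 1) (Icc a b) :=
  fun _ hz => Icc_subset_Icc_right hz.1.2 (rpowLerp_mem_Icc hr ha hz.1.1 hz.2)

end rpowLerp

lemma rpowLerp_deriv_mul_kernel {a x p α σ : ℝ} (ha : 0 < a) (hax : a < x) (hp : -1 < p)
    (hσ : σ ∈ Icc (0 : ℝ) 1) :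
    (x ^ (p + 1) - a ^ (p + 1)) * (p + 1)⁻¹ *
        (a ^ (p + 1) + σ * (x ^ (p + 1) - a ^ (p + 1))) ^ ((p + 1)⁻¹ - 1) *
      ((x ^ (p + 1) - rpowLerp (p + 1) a x σ ^ (p + 1)) ^ (α - 1) * rpowLerp (p + 1) a x σ ^ p) =
    (x ^ (p + 1) - a ^ (p + 1)) ^ α / (p + 1) * (1 - σ) ^ (α - 1) := by
  have hr : p + 1 ≠ 0 := by linarith
  set Δ := x ^ (p + 1) - a ^ (p + 1)
  have hΔ : 0 < Δ := sub_pos.2 (Real.rpow_lt_rpow ha.le hax (by linarith))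
  set B := a ^ (p + 1) + σ * Δ
  have hB : 0 < B := rpowLerp_base_pos ha (ha.trans hax) hσ
  have hφp : rpowLerp (p + 1) a x σ ^ p = B ^ ((p + 1)⁻¹ * p) := (Real.rpow_mul hB.le _ _).symm
  have hB1 : B ^ ((p + 1)⁻¹ - 1) * B ^ ((p + 1)⁻¹ * p) = 1 := by
    rw [← Real.rpow_add hB, show (p + 1)⁻¹ - 1 + (p + 1)⁻¹ * p = 0 by field_simp; ring,
      Real.rpow_zero]
  have hgap : x ^ (p + 1) - B = (1 - σ) * Δ := by ring
  rw [rpowLerp_rpow hr ha (ha.trans hax) hσ, hφp, hgap, Real.mul_rpow (by linarith [hσ.2]) hΔ.le,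
    Real.rpow_sub_one hΔ.ne', eq_inv_of_mul_eq_one_left hB1]
  have := (Real.rpow_pos_of_pos hB ((p + 1)⁻¹ * p)).ne'
  field_simp

theorem integral_katugampola_kernel_eq {a x p α : ℝ} (ha : 0 < a) (hax : a ≤ x) (hp : -1 < p)
    (hα : 0 < α) (F : ℝ → ℝ) :
    ∫ s in a..x, (x ^ (p + 1) - s ^ (p + 1)) ^ (α - 1) * (s ^ p * F s) =
      (x ^ (p + 1) - a ^ (p + 1)) ^ α / (p + 1) *
        ∫ σ in Icc (0 : ℝ) 1, (1 - σ) ^ (α - 1) * F (rpowLerp (p + 1) a x σ) := by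
  rcases hax.eq_or_lt with rfl | hax
  · simp [Real.zero_rpow hα.ne']
  have hr : 0 < p + 1 := by linarith
  have hx : 0 < x := ha.trans hax
  set Δ := x ^ (p + 1) - a ^ (p + 1)
  have hΔ : 0 < Δ := sub_pos.2 (Real.rpow_lt_rpow ha.le hax hr)
  set φ' : ℝ → ℝ := fun σ => Δ * (p + 1)⁻¹ * (a ^ (p + 1) + σ * Δ) ^ ((p + 1)⁻¹ - 1)
  have hφ' : ∀ σ ∈ Icc (0 : ℝ) 1, HasDerivWithinAt (rpowLerp (p + 1) a x) (φ' σ) (Icc 0 1) σ :=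
    fun σ hσ => (hasDerivAt_rpowLerp ha hx hσ).hasDerivWithinAt
  have hφ'_pos : ∀ σ ∈ Icc (0 : ℝ) 1, 0 < φ' σ := fun σ hσ =>
    mul_pos (mul_pos hΔ (inv_pos.2 hr)) (Real.rpow_pos_of_pos (rpowLerp_base_pos ha hx hσ) _)
  calc ∫ s in a..x, (x ^ (p + 1) - s ^ (p + 1)) ^ (α - 1) * (s ^ p * F s)
      = ∫ s in rpowLerp (p + 1) a x '' Icc 0 1,
          (x ^ (p + 1) - s ^ (p + 1)) ^ (α - 1) * (s ^ p * F s) := by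
        rw [intervalIntegral.integral_of_le hax.le, image_rpowLerp_Icc hr ha hax,
          integral_Icc_eq_integral_Ioc]
    _ = ∫ σ in Icc (0 : ℝ) 1, |φ' σ| • ((x ^ (p + 1) - rpowLerp (p + 1) a x σ ^ (p + 1)) ^ (α - 1) *
          (rpowLerp (p + 1) a x σ ^ p * F (rpowLerp (p + 1) a x σ))) :=
        integral_image_eq_integral_abs_deriv_smul measurableSet_Icc hφ'
          (strictMonoOn_rpowLerp hr ha hax).injOn _
    _ = ∫ σ in Icc (0 : ℝ) 1, Δ ^ α / (p + 1) *
          ((1 - σ) ^ (α - 1) * F (rpowLerp (p + 1) a x σ)) := by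
        refine setIntegral_congr_fun measurableSet_Icc fun σ hσ => ?_
        rw [smul_eq_mul, abs_of_pos (hφ'_pos σ hσ)]
        linear_combination F (rpowLerp (p + 1) a x σ) * rpowLerp_deriv_mul_kernel ha hax hp hσ
    _ = _ := integral_const_mul _ _

theorem continuousOn_setIntegral_mul_of_isCompact {X Y : Type*} [TopologicalSpace X]
    [FirstCountableTopology X]
    [TopologicalSpace Y] [MeasurableSpace Y] [OpensMeasurableSpace Y] [T2Space Y]
    {μ : Measure Y} {T : Set X} {K : Set Y} (hT : IsCompact T) (hK : IsCompact K)
    {w : Y → ℝ} (hw : IntegrableOn w K μ) {G : X → Y → ℝ}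
    (hG : ContinuousOn (fun z : X × Y => G z.1 z.2) (T ×ˢ K)) :
    ContinuousOn (fun x => ∫ σ in K, w σ * G x σ ∂μ) T := by
  obtain ⟨M, hM⟩ := (hT.prod hK).exists_bound_of_continuousOn hG
  refine continuousOn_of_dominated (bound := fun σ => ‖w σ‖ * M) (fun x hx => ?_)
    (fun x hx => ?_) (hw.norm.mul_const M) ?_
  · exact hw.aestronglyMeasurable.mul <|
      (hG.comp (continuousOn_const.prodMk continuousOn_id) fun σ hσ => ⟨hx, hσ⟩).aestronglyMeasurable
        hK.measurableSet
  · filter_upwards [ae_restrict_mem hK.measurableSet] with σ hσ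
    rw [norm_mul]
    exact mul_le_mul_of_nonneg_left (hM (x, σ) ⟨hx, hσ⟩) (norm_nonneg _)
  · filter_upwards [ae_restrict_mem hK.measurableSet] with σ hσ
    exact continuousOn_const.mul
      (hG.comp (continuousOn_id.prodMk continuousOn_const) fun x hx => ⟨hx, hσ⟩)

lemma integrableOn_one_sub_rpow_Icc {α : ℝ} (hα : 0 < α) :
    IntegrableOn (fun σ : ℝ => (1 - σ) ^ (α - 1)) (Icc 0 1) := by
  rw [integrableOn_Icc_iff_integrableOn_Ioc, ← intervalIntegrable_iff_integrableOn_Ioc_of_le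
    zero_le_one]
  simpa using (intervalIntegral.intervalIntegrable_rpow' (a := 1) (b := 0)
    (by linarith : -1 < α - 1)).comp_sub_left 1

theorem continuousOn_integral_rpowLerp {Y : Type*} [TopologicalSpace Y]
    [FirstCountableTopology Y] {r a b γ : ℝ} {S : Set Y} (hr : 0 < r) (ha : 0 < a) (hγ : 0 < γ)
    (hS : IsCompact S) {K : ℝ → Y → ℝ}
    (hK : ContinuousOn (fun z : ℝ × Y => K z.1 z.2) (Icc a b ×ˢ S)) :
    ContinuousOn (fun z : ℝ × Y => ∫ σ in Icc (0 : ℝ) 1,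
      (1 - σ) ^ (γ - 1) * K (rpowLerp r a z.1 σ) z.2) (Icc a b ×ˢ S) := by
  refine continuousOn_setIntegral_mul_of_isCompact (isCompact_Icc.prod hS) isCompact_Icc
    (integrableOn_one_sub_rpow_Icc hγ)
    (hK.comp (f := fun w : (ℝ × Y) × ℝ => (rpowLerp r a w.1.1 w.2, w.1.2)) ?_
      fun w hw => ⟨mapsTo_rpowLerp hr ha (x := (w.1.1, w.2)) ⟨hw.1.1, hw.2⟩, hw.1.2⟩)
  exact ((continuousOn_rpowLerp ha).comp (continuous_fst.fst.prodMk continuous_snd).continuousOn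
    fun w hw => ⟨ha.trans_le hw.1.1.1, hw.2⟩).prodMk continuous_fst.snd.continuousOn

theorem mixedKI_eq {a c p q α β x y : ℝ} (ha : 0 < a) (hax : a ≤ x) (hc : 0 < c) (hcy : c ≤ y)
    (hp : -1 < p) (hq : -1 < q) (hα : 0 < α) (hβ : 0 < β) (f : ℝ → ℝ → ℝ) :
    mixedKI a c p q α β f x y =
      (p + 1) ^ (1 - α) * (q + 1) ^ (1 - β) / (Real.Gamma α * Real.Gamma β) *
        ((x ^ (p + 1) - a ^ (p + 1)) ^ α / (p + 1) * ((y ^ (q + 1) - c ^ (q + 1)) ^ β / (q + 1) *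
          ∫ σ in Icc (0 : ℝ) 1, (1 - σ) ^ (α - 1) * ∫ τ in Icc (0 : ℝ) 1,
            (1 - τ) ^ (β - 1) * f (rpowLerp (p + 1) a x σ) (rpowLerp (q + 1) c y τ))) := by
  set Cy := (y ^ (q + 1) - c ^ (q + 1)) ^ β / (q + 1)
  have hinner : ∀ s, ∫ t in c..y, (x ^ (p + 1) - s ^ (p + 1)) ^ (α - 1) *
      (y ^ (q + 1) - t ^ (q + 1)) ^ (β - 1) * s ^ p * t ^ q * f s t =
      (x ^ (p + 1) - s ^ (p + 1)) ^ (α - 1) * (s ^ p * (Cy * ∫ τ in Icc (0 : ℝ) 1,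
        (1 - τ) ^ (β - 1) * f s (rpowLerp (q + 1) c y τ))) := by
    intro s
    rw [← integral_katugampola_kernel_eq hc hcy hq hβ (f s), ← mul_assoc,
      ← intervalIntegral.integral_const_mul]
    congr 1 with t
    ring
  unfold mixedKI
  simp only [hinner]
  rw [integral_katugampola_kernel_eq ha hax hp hα, ← integral_const_mul Cy]
  congr 4 with σ
  ring

lemma continuousOn_rpow_sub_rpow_rpow {r a γ : ℝ} (hγ : 0 ≤ γ) :
    ContinuousOn (fun x : ℝ => (x ^ r - a ^ r) ^ γ) (Ioi 0) :=
  ((continuousOn_id.rpow_const fun _ hx => Or.inl (ne_of_gt hx)).sub continuousOn_const).rpow_const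
    fun _ _ => Or.inr hγ

theorem mixedKI_continuous_general (a b c d p q α β : ℝ)
    (ha : 0 < a) (hc : 0 < c)
    (hp : -1 < p) (hq : -1 < q) (hα : 0 < α) (hβ : 0 < β)
    (f : ℝ → ℝ → ℝ)
    (hf : ContinuousOn (fun pt : ℝ × ℝ => f pt.1 pt.2) (Icc a b ×ˢ Icc c d)) :
    ContinuousOn (fun pt : ℝ × ℝ => mixedKI a c p q α β f pt.1 pt.2)
      (Icc a b ×ˢ Icc c d) := by
  have hp1 : 0 < p + 1 := by linarith
  have hq1 : 0 < q + 1 := by linarith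
  have hinner : ContinuousOn (fun z : ℝ × ℝ => ∫ τ in Icc (0 : ℝ) 1,
      (1 - τ) ^ (β - 1) * f z.1 (rpowLerp (q + 1) c z.2 τ)) (Icc a b ×ˢ Icc c d) :=
    (continuousOn_integral_rpowLerp hq1 hc hβ isCompact_Icc (K := fun t x => f x t)
      (hf.comp continuous_swap.continuousOn (mapsTo_swap_prod _ _))).comp
      continuous_swap.continuousOn (mapsTo_swap_prod _ _)
  have houter := continuousOn_integral_rpowLerp hp1 ha hα isCompact_Icc
    (K := fun x y => ∫ τ in Icc (0 : ℝ) 1, (1 - τ) ^ (β - 1) * f x (rpowLerp (q + 1) c y τ))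
    hinner
  refine ContinuousOn.congr ?_ fun z hz => mixedKI_eq ha hz.1.1 hc hz.2.1 hp hq hα hβ f
  refine continuousOn_const.mul <|
    (ContinuousOn.div_const ?_ _).mul ((ContinuousOn.div_const ?_ _).mul houter)
  · exact (continuousOn_rpow_sub_rpow_rpow hα.le).comp continuousOn_fst
      fun z hz => ha.trans_le hz.1.1
  · exact (continuousOn_rpow_sub_rpow_rpow hβ.le).comp continuousOn_snd
      fun z hz => hc.trans_le hz.2.1

/-- continuity of the mixed Katugampola fractional integral. -/
theorem mixedKI_continuous (a b c d p q α β : ℝ)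
    (ha : 0 < a) (hab : a < b) (hc : 0 < c) (hcd : c < d)
    (hp : -1 < p) (hq : -1 < q) (hα : 0 < α) (hβ : 0 < β)
    (f : ℝ → ℝ → ℝ)
    (hf : ContinuousOn (fun pt : ℝ × ℝ => f pt.1 pt.2) (Icc a b ×ˢ Icc c d)) :
    ContinuousOn (fun pt : ℝ × ℝ => mixedKI a c p q α β f pt.1 pt.2)
      (Icc a b ×ˢ Icc c d) :=
  mixedKI_continuous_general a b c d p q α β ha hc hp hq hα hβ f hf
end

section
/- Let f : [a,b] × [c,d] → ℝ be of bounded variation in the sense of Arzelà. (1) If f(a,c) ≥ 0, then there exist monotone functions f₁, f₂ : [a,b] × [c,d] → ℝ such that f = f₁ - f₂, f₁(a,c) ≥ 0 and f₂(a,c) = 0. (2) If f(a,c) < 0, then there exist monotone functions f₁, f₂ : [a,b] × [c,d] → ℝ such that f = f₁ - f₂, f₁(a,c) = 0 and f₂(a,c) > 0. -/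
/-!
Let `v(x, y)` be the supremum of the sums `∑ |f(pᵢ₊₁) - f(pᵢ)|` over chains `pᵢ` from `(a, c)` to
`(x, y)` that are monotone in both coordinates; it is finite on the rectangle by the Arzelà
bound. Appending the step `(x, y) → (x', y')` to a chain shows
`v(x, y) + |f(x', y') - f(x, y)| ≤ v(x', y')`, so both `v` and `v + f` are monotone, and
`f = (v + f) - v`. Adding a common constant to both terms fixes their values at `(a, c)`.
-/

open MeasureTheory Set Filter
open scoped Classical

def arzelaSums (a c : ℝ) (f : ℝ → ℝ → ℝ) (x y : ℝ) : Set ℝ :=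
  {s | ∃ m : ℕ, ∃ u w : ℕ → ℝ, u 0 = a ∧ u m = x ∧ w 0 = c ∧ w m = y ∧
    (∀ i < m, u i ≤ u (i + 1)) ∧ (∀ i < m, w i ≤ w (i + 1)) ∧
    s = ∑ i ∈ Finset.range m, |f (u (i + 1)) (w (i + 1)) - f (u i) (w i)|}

noncomputable def arzelaVariation (a c : ℝ) (f : ℝ → ℝ → ℝ) (x y : ℝ) : ℝ :=
  sSup (arzelaSums a c f x y)

lemma abs_sub_mem_arzelaSums {a c x y : ℝ} (f : ℝ → ℝ → ℝ) (hax : a ≤ x) (hcy : c ≤ y) :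
    |f x y - f a c| ∈ arzelaSums a c f x y := by
  refine ⟨1, fun i => if i = 0 then a else x, fun i => if i = 0 then c else y,
    by simp, by simp, by simp, by simp, ?_, ?_, by simp⟩ <;>
  · intro i hi
    obtain rfl : i = 0 := by omega
    simpa

lemma update_succ_le_update_succ {α : Type*} [Preorder α] {u : ℕ → α} {m : ℕ} {x : α}
    (hu : ∀ i < m, u i ≤ u (i + 1)) (hx : u m ≤ x) :
    ∀ i < m + 1, Function.update u (m + 1) x i ≤ Function.update u (m + 1) x (i + 1) := by
  intro i hi
  rcases Nat.lt_or_ge i m with h | h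
  · rw [Function.update_of_ne (by omega), Function.update_of_ne (by omega)]
    exact hu i h
  · obtain rfl : i = m := by omega
    simpa using hx

lemma add_abs_sub_mem_arzelaSums {a c x y x' y' s : ℝ} {f : ℝ → ℝ → ℝ}
    (hs : s ∈ arzelaSums a c f x y) (hx : x ≤ x') (hy : y ≤ y') :
    s + |f x' y' - f x y| ∈ arzelaSums a c f x' y' := by
  obtain ⟨m, u, w, hu0, rfl, hw0, rfl, hu, hw, rfl⟩ := hs
  refine ⟨m + 1, Function.update u (m + 1) x', Function.update w (m + 1) y',
    by simp [hu0], by simp, by simp [hw0], by simp,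
    update_succ_le_update_succ hu hx, update_succ_le_update_succ hw hy, ?_⟩
  rw [Finset.sum_range_succ]
  congr 1
  · refine Finset.sum_congr rfl fun i hi => ?_
    have hi : i < m := Finset.mem_range.mp hi
    rw [Function.update_of_ne (by omega), Function.update_of_ne (by omega),
      Function.update_of_ne (by omega), Function.update_of_ne (by omega)]
  · simp

namespace ArzelaBV

variable {a b c d : ℝ} {f : ℝ → ℝ → ℝ}

lemma bddAbove_arzelaSums (hf : ArzelaBV a b c d f) {x y : ℝ} (hxb : x ≤ b) (hyd : y ≤ d) :
    BddAbove (arzelaSums a c f x y) := by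
  obtain ⟨M, -, hM⟩ := hf
  refine ⟨M, fun s hs => ?_⟩
  obtain ⟨m, u, w, hu0, hum, hw0, hwm, hu, hw, hsum⟩ := add_abs_sub_mem_arzelaSums hs hxb hyd
  have := hM m u w hu0 hum hw0 hwm hu hw
  linarith [abs_nonneg (f b d - f x y)]

lemma arzelaVariation_add_abs_sub_le (hf : ArzelaBV a b c d f) {x y x' y' : ℝ}
    (hax : a ≤ x) (hxx' : x ≤ x') (hx'b : x' ≤ b) (hcy : c ≤ y) (hyy' : y ≤ y') (hy'd : y' ≤ d) :
    arzelaVariation a c f x y + |f x' y' - f x y| ≤ arzelaVariation a c f x' y' := by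
  rw [← le_sub_iff_add_le]
  refine csSup_le ⟨_, abs_sub_mem_arzelaSums f hax hcy⟩ fun s hs => le_sub_iff_add_le.mpr ?_
  exact le_csSup (hf.bddAbove_arzelaSums hx'b hy'd) (add_abs_sub_mem_arzelaSums hs hxx' hyy')

end ArzelaBV

lemma monotoneRect_of_le {a b c d : ℝ} {g : ℝ → ℝ → ℝ}
    (hg : ∀ x y x' y', a ≤ x → x ≤ x' → x' ≤ b → c ≤ y → y ≤ y' → y' ≤ d → g x y ≤ g x' y') :
    MonotoneRect a b c d g := by
  refine ⟨⟨max |g a c| |g b d|, fun x hx y hy => abs_le_max_abs_abs ?_ ?_⟩,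
    fun x hx x' hx' hxx' y hy => hg x y x' y hx.1 hxx' hx'.2 hy.1 le_rfl hy.2,
    fun y hy y' hy' hyy' x hx => hg x y x y' hx.1 le_rfl hx.2 hy.1 hyy' hy'.2⟩
  · exact hg a c x y le_rfl hx.1 hx.2 le_rfl hy.1 hy.2
  · exact hg x y b d hx.1 hx.2 le_rfl hy.1 hy.2 le_rfl

theorem arzelaBV_decomposition_general (a b c d : ℝ)
    (f : ℝ → ℝ → ℝ) (hf : ArzelaBV a b c d f) :
    (0 ≤ f a c →
      ∃ f₁ f₂ : ℝ → ℝ → ℝ, MonotoneRect a b c d f₁ ∧ MonotoneRect a b c d f₂ ∧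
        (∀ x ∈ Icc a b, ∀ y ∈ Icc c d, f x y = f₁ x y - f₂ x y) ∧
        0 ≤ f₁ a c ∧ f₂ a c = 0) ∧
    (f a c < 0 →
      ∃ f₁ f₂ : ℝ → ℝ → ℝ, MonotoneRect a b c d f₁ ∧ MonotoneRect a b c d f₂ ∧
        (∀ x ∈ Icc a b, ∀ y ∈ Icc c d, f x y = f₁ x y - f₂ x y) ∧
        f₁ a c = 0 ∧ 0 < f₂ a c) := by
  set v := arzelaVariation a c f
  have hv (k : ℝ) : MonotoneRect a b c d (fun x y => v x y + k) :=
    monotoneRect_of_le fun x y x' y' h₁ h₂ h₃ h₄ h₅ h₆ => by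
      linarith [hf.arzelaVariation_add_abs_sub_le h₁ h₂ h₃ h₄ h₅ h₆,
        abs_nonneg (f x' y' - f x y)]
  have hvf (k : ℝ) : MonotoneRect a b c d (fun x y => v x y + f x y + k) :=
    monotoneRect_of_le fun x y x' y' h₁ h₂ h₃ h₄ h₅ h₆ => by
      linarith [hf.arzelaVariation_add_abs_sub_le h₁ h₂ h₃ h₄ h₅ h₆,
        neg_abs_le (f x' y' - f x y)]
  refine ⟨fun hfac => ?_, fun hfac => ?_⟩
  · refine ⟨_, _, hvf (-v a c), hv (-v a c), fun x _ y _ => by ring, ?_, ?_⟩ <;> linarith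
  · refine ⟨_, _, hvf (-v a c - f a c), hv (-v a c - f a c), fun x _ y _ => by ring, ?_, ?_⟩ <;>
      linarith

/-- Jordan-type decomposition of a function of bounded variation
in the sense of Arzelà into monotone functions. -/
theorem arzelaBV_decomposition (a b c d : ℝ) (hab : a ≤ b) (hcd : c ≤ d)
    (f : ℝ → ℝ → ℝ) (hf : ArzelaBV a b c d f) :
    (0 ≤ f a c →
      ∃ f₁ f₂ : ℝ → ℝ → ℝ, MonotoneRect a b c d f₁ ∧ MonotoneRect a b c d f₂ ∧
        (∀ x ∈ Icc a b, ∀ y ∈ Icc c d, f x y = f₁ x y - f₂ x y) ∧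
        0 ≤ f₁ a c ∧ f₂ a c = 0) ∧
    (f a c < 0 →
      ∃ f₁ f₂ : ℝ → ℝ → ℝ, MonotoneRect a b c d f₁ ∧ MonotoneRect a b c d f₂ ∧
        (∀ x ∈ Icc a b, ∀ y ∈ Icc c d, f x y = f₁ x y - f₂ x y) ∧
        f₁ a c = 0 ∧ 0 < f₂ a c) :=
  arzelaBV_decomposition_general a b c d f hf
end

section
/- If f : [a,b] × [c,d] → ℝ is continuous and of bounded variation in the sense of Arzelà, then the box dimension of its graph G(f) exists and dim_B(G(f)) = dim_H(G(f)) = 2, where dim_H denotes Hausdorff dimension. -/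
open MeasureTheory Set Filter
open scoped Classical

/-!
Cover the rectangle by the `δ`-mesh. Above the cell `(i, j)` the graph meets at most
`osc_{ij} / δ + 2` cubes, where `osc_{ij}` is the oscillation of `f` on the cell. The cells of a
diagonal `i - j = r` are ordered coordinatewise, so the lower cell corners interleaved with the
points where `f` is extremal form a monotone chain: Arzelà bounded variation bounds the total
oscillation along a diagonal by `2 M`. There are `O(1/δ)` diagonals and `O(1/δ²)` cells, so the
graph meets `O(1/δ²)` cubes; it meets at least one cube above each grid point, hence `≍ 1/δ²`
cubes and both box dimensions are `2`. The same covers show `μH[t] G = 0` for `t > 2`, and the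
projection onto the rectangle, which is `1`-Lipschitz, gives `dimH G ≥ 2`.
-/

open scoped NNReal Topology

section Clamp

variable {α : Type*} [Lattice α]

def clampIcc (l u x : α) : α := l ⊔ (x ⊓ u)

lemma clampIcc_mem {l u : α} (h : l ≤ u) (x : α) : clampIcc l u x ∈ Icc l u :=
  ⟨le_sup_left, sup_le h inf_le_right⟩

lemma clampIcc_mono (l u : α) : Monotone (clampIcc l u) :=
  fun _ _ h => sup_le_sup_left (inf_le_inf_right _ h) _

lemma clampIcc_of_mem {l u x : α} (hx : x ∈ Icc l u) : clampIcc l u x = x := by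
  rw [clampIcc, inf_eq_left.2 hx.2, sup_eq_right.2 hx.1]

end Clamp

section PlaneMesh

variable {l u : ℝ × ℝ} {δ : ℝ}

def meshPt (δ : ℝ) (i j : ℤ) : ℝ × ℝ := (i * δ, j * δ)

/-- The mesh cell `[iδ, (i+1)δ] × [jδ, (j+1)δ]` with its corners clamped into `Icc l u`.
Unlike the intersection of the cell with `Icc l u` it is never empty, and the upper corner of
cell `(i, j)` is the lower corner of cell `(i + 1, j + 1)`. -/
def meshCell (l u : ℝ × ℝ) (δ : ℝ) (i j : ℤ) : Set (ℝ × ℝ) :=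
  Icc (clampIcc l u (meshPt δ i j)) (clampIcc l u (meshPt δ (i + 1) (j + 1)))

lemma meshCell_subset (hlu : l ≤ u) (i j : ℤ) : meshCell l u δ i j ⊆ Icc l u :=
  Icc_subset_Icc (clampIcc_mem hlu _).1 (clampIcc_mem hlu _).2

lemma meshCell_nonempty (hδ : 0 ≤ δ) (i j : ℤ) : (meshCell l u δ i j).Nonempty := by
  refine nonempty_Icc.2 (clampIcc_mono l u ⟨?_, ?_⟩) <;>
    · simp only [meshPt]; push_cast; nlinarith

lemma mem_meshCell {z : ℝ × ℝ} {i j : ℤ} (hz : z ∈ Icc l u) (h₁ : meshPt δ i j ≤ z)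
    (h₂ : z ≤ meshPt δ (i + 1) (j + 1)) : z ∈ meshCell l u δ i j := by
  refine ⟨?_, ?_⟩ <;> rw [← clampIcc_of_mem hz] <;> apply clampIcc_mono
  exacts [h₁, h₂]

lemma exists_extrema_meshCell {g : ℝ × ℝ → ℝ} (hlu : l ≤ u) (hδ : 0 ≤ δ)
    (hg : ContinuousOn g (Icc l u)) (i j : ℤ) :
    ∃ p ∈ meshCell l u δ i j, ∃ q ∈ meshCell l u δ i j,
      ∀ z ∈ meshCell l u δ i j, g q ≤ g z ∧ g z ≤ g p := by
  have hg' := hg.mono (meshCell_subset (δ := δ) hlu i j)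
  obtain ⟨p, hp, hpmax⟩ := isCompact_Icc.exists_isMaxOn (meshCell_nonempty hδ i j) hg'
  obtain ⟨q, hq, hqmin⟩ := isCompact_Icc.exists_isMinOn (meshCell_nonempty hδ i j) hg'
  exact ⟨p, hp, q, hq, fun z hz => ⟨hqmin hz, hpmax hz⟩⟩

end PlaneMesh

def ChainVariationLE {α : Type*} [Preorder α] (g : α → ℝ) (s : Set α) (M : ℝ) : Prop :=
  ∀ (K : ℕ) (P : ℕ → α), (∀ i ≤ K, P i ∈ s) → (∀ i < K, P i ≤ P (i + 1)) →
    ∑ i ∈ Finset.range K, |g (P (i + 1)) - g (P i)| ≤ M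

/-- A monotone chain in the rectangle becomes an admissible Arzelà chain once the corners
`(a, c)` and `(b, d)` are added at its ends. -/
lemma ArzelaBV.exists_chainVariationLE {a b c d : ℝ} {f : ℝ → ℝ → ℝ} (hf : ArzelaBV a b c d f) :
    ∃ M, ChainVariationLE (fun pt : ℝ × ℝ => f pt.1 pt.2) (Icc (a, c) (b, d)) M := by
  obtain ⟨M, -, hM⟩ := hf
  refine ⟨M, fun K P hP hmono => ?_⟩
  set Q : ℕ → ℝ × ℝ := fun n => if n = 0 then (a, c) else if n ≤ K + 1 then P (n - 1) else (b, d)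
  have hQ : ∀ i < K + 2, Q i ≤ Q (i + 1) := by
    intro i hi
    rcases Nat.eq_zero_or_pos i with rfl | hpos
    · simpa [Q] using (hP 0 (Nat.zero_le _)).1
    rcases Nat.lt_or_ge i (K + 1) with hiK | hiK
    · obtain ⟨n, rfl⟩ := Nat.exists_eq_add_of_lt hpos
      simpa [Q, show n + 1 ≤ K + 1 by omega, show n + 2 ≤ K + 1 by omega]
        using hmono n (by omega)
    · obtain rfl : i = K + 1 := by omega
      simpa [Q] using (hP K le_rfl).2
  have hsum := hM (K + 2) (fun n => (Q n).1) (fun n => (Q n).2) (by simp [Q]) (by simp [Q])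
    (by simp [Q]) (by simp [Q]) (fun i hi => (hQ i hi).1) (fun i hi => (hQ i hi).2)
  rw [Finset.sum_range_succ, Finset.sum_range_succ', zero_add] at hsum
  have hinner : ∀ i ∈ Finset.range K, |f (Q (i + 1 + 1)).1 (Q (i + 1 + 1)).2 -
      f (Q (i + 1)).1 (Q (i + 1)).2| = |f (P (i + 1)).1 (P (i + 1)).2 - f (P i).1 (P i).2| := by
    intro i hi
    rw [Finset.mem_range] at hi
    simp [Q, show i + 2 ≤ K + 1 by omega, show i ≤ K by omega]
  rw [Finset.sum_congr rfl hinner] at hsum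
  linarith [abs_nonneg (f (Q 1).1 (Q 1).2 - f (Q 0).1 (Q 0).2),
    abs_nonneg (f (Q (K + 1 + 1)).1 (Q (K + 1 + 1)).2 - f (Q (K + 1)).1 (Q (K + 1)).2)]

namespace ChainVariationLE

variable {α : Type*} [Preorder α] {g : α → ℝ} {s : Set α} {M : ℝ}

lemma nonneg (hV : ChainVariationLE g s M) {x : α} (hx : x ∈ s) : 0 ≤ M := by
  simpa using hV 0 (fun _ => x) (fun _ _ => hx) (by simp)

lemma sum_abs_sub_le (hV : ChainVariationLE g s M) {v w : ℕ → α} (hv : ∀ t, v t ∈ s)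
    (hw : ∀ t, w t ∈ s) (hvw : ∀ t, v t ≤ w t) (hwv : ∀ t, w t ≤ v (t + 1)) (K : ℕ) :
    ∑ t ∈ Finset.range K, |g (w t) - g (v t)| ≤ M := by
  set P : ℕ → α := fun n => if n % 2 = 0 then v (n / 2) else w (n / 2)
  have hP0 : ∀ t, P (2 * t) = v t := fun t => by simp [P]
  have hP1 : ∀ t, P (2 * t + 1) = w t := fun t => by simp [P, Nat.add_mod, Nat.add_div]
  have hchain := hV (2 * K) P (fun i _ => by by_cases h : i % 2 = 0 <;> simp [P, h, hv, hw])
    (fun i _ => by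
      obtain ⟨t, rfl | rfl⟩ := Nat.even_or_odd' i
      · simpa [hP0, hP1] using hvw t
      · simpa [hP1, show 2 * t + 1 + 1 = 2 * (t + 1) by ring, hP0] using hwv t)
  calc ∑ t ∈ Finset.range K, |g (w t) - g (v t)|
      = ∑ i ∈ (Finset.range K).image (2 * ·), |g (P (i + 1)) - g (P i)| := by
        rw [Finset.sum_image (by intro _ _ _ _ h; simpa using h)]
        simp [hP0, hP1]
    _ ≤ ∑ i ∈ Finset.range (2 * K), |g (P (i + 1)) - g (P i)| :=
        Finset.sum_le_sum_of_subset_of_nonneg (by intro i; simp; omega)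
          (fun _ _ _ => abs_nonneg _)
    _ ≤ M := hchain

end ChainVariationLE

namespace ChainVariationLE

variable {g : ℝ × ℝ → ℝ} {l u : ℝ × ℝ} {δ M : ℝ} {p q : ℤ → ℤ → ℝ × ℝ}

lemma sum_sub_diag_le (hV : ChainVariationLE g (Icc l u) M) (hlu : l ≤ u)
    (hp : ∀ i j, p i j ∈ meshCell l u δ i j) (hq : ∀ i j, q i j ∈ meshCell l u δ i j)
    (i₀ j₀ : ℤ) (K : ℕ) :
    ∑ t ∈ Finset.range K, (g (p (i₀ + t) (j₀ + t)) - g (q (i₀ + t) (j₀ + t))) ≤ 2 * M := by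
  set v : ℕ → ℝ × ℝ := fun t => clampIcc l u (meshPt δ (i₀ + t) (j₀ + t))
  have hcell : ∀ t : ℕ, meshCell l u δ (i₀ + t) (j₀ + t) = Icc (v t) (v (t + 1)) := by
    intro t
    simp only [meshCell, v, Nat.cast_succ, add_assoc]
  -- the lower corners of the diagonal cells interleave with any choice of points in them
  have hchain : ∀ r : ℤ → ℤ → ℝ × ℝ, (∀ i j, r i j ∈ meshCell l u δ i j) →
      ∑ t ∈ Finset.range K, |g (r (i₀ + t) (j₀ + t)) - g (v t)| ≤ M := by
    intro r hr
    have hr' : ∀ t : ℕ, r (i₀ + t) (j₀ + t) ∈ Icc (v t) (v (t + 1)) := fun t =>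
      hcell t ▸ hr _ _
    exact hV.sum_abs_sub_le (fun t => clampIcc_mem hlu _)
      (fun t => meshCell_subset hlu _ _ (hr _ _)) (fun t => (hr' t).1) (fun t => (hr' t).2) K
  calc ∑ t ∈ Finset.range K, (g (p (i₀ + t) (j₀ + t)) - g (q (i₀ + t) (j₀ + t)))
      ≤ ∑ t ∈ Finset.range K,
          (|g (p (i₀ + t) (j₀ + t)) - g (v t)| + |g (q (i₀ + t) (j₀ + t)) - g (v t)|) :=
        Finset.sum_le_sum fun t _ => by
          linarith [le_abs_self (g (p (i₀ + t) (j₀ + t)) - g (v t)),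
            neg_abs_le (g (q (i₀ + t) (j₀ + t)) - g (v t))]
    _ ≤ M + M := by rw [Finset.sum_add_distrib]; exact add_le_add (hchain p hp) (hchain q hq)
    _ = 2 * M := by ring

/-- Cut the box of cells into its diagonals `i - j = r`, each carrying at most `2 * M`. -/
lemma sum_sub_box_le (hV : ChainVariationLE g (Icc l u) M) (hlu : l ≤ u)
    (hp : ∀ i j, p i j ∈ meshCell l u δ i j) (hq : ∀ i j, q i j ∈ meshCell l u δ i j)
    (hpq : ∀ i j, g (q i j) ≤ g (p i j)) (i₁ i₂ j₁ j₂ : ℤ) :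
    ∑ ij ∈ Finset.Icc i₁ i₂ ×ˢ Finset.Icc j₁ j₂, (g (p ij.1 ij.2) - g (q ij.1 ij.2)) ≤
      ((Finset.Icc i₁ i₂).card + (Finset.Icc j₁ j₂).card) * (2 * M) := by
  set K := (Finset.Icc i₁ i₂).card
  set D := Finset.Icc (i₁ - j₂) (i₂ - j₁)
  set φ : ℤ × ℕ → ℤ × ℤ := fun rt => (i₁ + rt.2, i₁ - rt.1 + rt.2)
  have hM : 0 ≤ M := hV.nonneg ⟨le_rfl, hlu⟩
  have hinj : Set.InjOn φ ↑(D ×ˢ Finset.range K) := by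
    rintro ⟨r, t⟩ - ⟨r', t'⟩ - h
    simp only [φ, Prod.mk.injEq] at h
    ext <;> omega
  have hcover : Finset.Icc i₁ i₂ ×ˢ Finset.Icc j₁ j₂ ⊆ (D ×ˢ Finset.range K).image φ := by
    rintro ⟨i, j⟩ h
    simp only [Finset.mem_product, Finset.mem_Icc] at h
    refine Finset.mem_image.2 ⟨(i - j, (i - i₁).toNat), ?_, ?_⟩
    · simp only [D, K, Finset.mem_product, Finset.mem_Icc, Finset.mem_range, Int.card_Icc]
      omega
    · simp only [φ, Prod.mk.injEq]
      omega
  have hD : (D.card : ℝ) ≤ K + (Finset.Icc j₁ j₂).card := by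
    simp only [D, K, Int.card_Icc]
    exact_mod_cast (by omega)
  calc ∑ ij ∈ Finset.Icc i₁ i₂ ×ˢ Finset.Icc j₁ j₂, (g (p ij.1 ij.2) - g (q ij.1 ij.2))
      ≤ ∑ ij ∈ (D ×ˢ Finset.range K).image φ, (g (p ij.1 ij.2) - g (q ij.1 ij.2)) :=
        Finset.sum_le_sum_of_subset_of_nonneg hcover fun ij _ _ => sub_nonneg.2 (hpq _ _)
    _ = ∑ r ∈ D, ∑ t ∈ Finset.range K,
          (g (p (i₁ + t) (i₁ - r + t)) - g (q (i₁ + t) (i₁ - r + t))) := by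
        rw [Finset.sum_image hinj, Finset.sum_product]
    _ ≤ ∑ _r ∈ D, 2 * M := Finset.sum_le_sum fun r _ => hV.sum_sub_diag_le hlu hp hq _ _ K
    _ = D.card * (2 * M) := by rw [Finset.sum_const, nsmul_eq_mul]
    _ ≤ (K + (Finset.Icc j₁ j₂).card) * (2 * M) := by gcongr

end ChainVariationLE

section Mesh

variable {δ : ℝ}

/-- The indices `k` for which the mesh interval `[kδ, (k+1)δ]` may meet `[x, y]`. -/
noncomputable def meshIdx (δ x y : ℝ) : Finset ℤ := Finset.Icc (⌈x / δ⌉ - 1) ⌊y / δ⌋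

lemma mem_meshIdx (hδ : 0 < δ) {x y t : ℝ} {k : ℤ} (ht : t ∈ Icc x y)
    (hk : t ∈ Icc (k * δ) ((k + 1) * δ)) : k ∈ meshIdx δ x y := by
  have h₁ : ⌈x / δ⌉ ≤ k + 1 :=
    Int.ceil_le.2 (by push_cast; rw [div_le_iff₀ hδ]; linarith [ht.1, hk.2])
  have h₂ : k ≤ ⌊y / δ⌋ := Int.le_floor.2 (by rw [le_div_iff₀ hδ]; linarith [ht.2, hk.1])
  exact Finset.mem_Icc.2 ⟨by omega, h₂⟩

lemma card_meshIdx_le (hδ : 0 < δ) {x y : ℝ} (hxy : x ≤ y) :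
    ((meshIdx δ x y).card : ℝ) ≤ (y - x) / δ + 2 := by
  rw [meshIdx, Int.card_Icc, ← Int.cast_natCast, Int.toNat_eq_max]
  push_cast
  have := Int.floor_le (y / δ)
  have := Int.le_ceil (x / δ)
  have : 0 ≤ (y - x) / δ := div_nonneg (sub_nonneg.2 hxy) hδ.le
  refine max_le ?_ (by linarith)
  rw [sub_div]
  linarith

lemma sub_div_sub_one_le_card_Icc (δ x y : ℝ) :
    (y - x) / δ - 1 ≤ ((Finset.Icc ⌈x / δ⌉ ⌊y / δ⌋).card : ℝ) := by
  rw [Int.card_Icc, ← Int.cast_natCast, Int.toNat_eq_max]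
  push_cast
  have := Int.lt_floor_add_one (y / δ)
  have := Int.ceil_lt_add_one (x / δ)
  rw [sub_div]
  exact le_max_of_le_left (by linarith)

def meshCubesMeeting (δ : ℝ) (S : Set (ℝ × ℝ × ℝ)) : Set (ℤ × ℤ × ℤ) :=
  {p | (meshCube δ p.1 p.2.1 p.2.2 ∩ S).Nonempty}

lemma meshCount_eq_ncard (δ : ℝ) (S : Set (ℝ × ℝ × ℝ)) :
    meshCount δ S = (meshCubesMeeting δ S).ncard :=
  Nat.card_coe_set_eq _

noncomputable def cubeIdx (δ : ℝ) (x : ℝ × ℝ × ℝ) : ℤ × ℤ × ℤ :=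
  (⌊x.1 / δ⌋, ⌊x.2.1 / δ⌋, ⌊x.2.2 / δ⌋)

lemma mem_meshCube_cubeIdx (hδ : 0 < δ) (x : ℝ × ℝ × ℝ) :
    x ∈ meshCube δ (cubeIdx δ x).1 (cubeIdx δ x).2.1 (cubeIdx δ x).2.2 := by
  have key : ∀ t : ℝ, t ∈ Icc ((⌊t / δ⌋ : ℝ) * δ) ((⌊t / δ⌋ + 1) * δ) := fun t =>
    ⟨(le_div_iff₀ hδ).1 (Int.floor_le _), (div_le_iff₀ hδ).1 (Int.lt_floor_add_one _).le⟩
  exact ⟨key _, key _, key _⟩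

lemma cubeIdx_mem_meshCubesMeeting (hδ : 0 < δ) {S : Set (ℝ × ℝ × ℝ)} {x : ℝ × ℝ × ℝ}
    (hx : x ∈ S) : cubeIdx δ x ∈ meshCubesMeeting δ S :=
  ⟨x, mem_meshCube_cubeIdx hδ x, hx⟩

lemma ediam_meshCube_le (i j k : ℤ) : Metric.ediam (meshCube δ i j k) ≤ ENNReal.ofReal δ := by
  have key : ∀ n : ℤ, ∀ s ∈ Icc (n * δ) ((n + 1) * δ), ∀ t ∈ Icc (n * δ) ((n + 1) * δ),
      edist s t ≤ ENNReal.ofReal δ := fun n s hs t ht =>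
    (Metric.edist_le_ediam_of_mem hs ht).trans_eq (by rw [Real.ediam_Icc]; ring_nf)
  refine Metric.ediam_le fun x hx y hy => ?_
  simp only [Prod.edist_eq, max_le_iff]
  exact ⟨key i _ hx.1 _ hy.1, key j _ hx.2.1 _ hy.2.1, key k _ hx.2.2 _ hy.2.2⟩

end Mesh

lemma hausdorffMeasure_eq_zero_of_meshCount_le {S : Set (ℝ × ℝ × ℝ)} {s t C : ℝ} (hs : 0 ≤ s)
    (hst : s < t)
    (h : ∀ᶠ δ in 𝓝[>] 0, (meshCubesMeeting δ S).Finite ∧ (meshCount δ S : ℝ) ≤ C / δ ^ s) :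
    μH[t] S = 0 := by
  have hr : Tendsto ENNReal.ofReal (𝓝[>] 0) (𝓝 0) := by
    simpa using (ENNReal.tendsto_ofReal tendsto_id).mono_left (nhdsWithin_le_nhds (a := (0 : ℝ)))
  have hcover : ∀ᶠ δ in 𝓝[>] (0 : ℝ),
      S ⊆ ⋃ i : meshCubesMeeting δ S, meshCube δ i.1.1 i.1.2.1 i.1.2.2 := by
    filter_upwards [self_mem_nhdsWithin] with δ hδ x hx
    exact mem_iUnion.2 ⟨⟨_, cubeIdx_mem_meshCubesMeeting hδ hx⟩, mem_meshCube_cubeIdx hδ x⟩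
  have hle := Measure.hausdorffMeasure_le_liminf_tsum t S ENNReal.ofReal hr
    (fun δ (i : meshCubesMeeting δ S) => meshCube δ i.1.1 i.1.2.1 i.1.2.2)
    (Eventually.of_forall fun δ i => ediam_meshCube_le _ _ _) hcover
  have hsum : ∀ᶠ δ in 𝓝[>] (0 : ℝ),
      ∑' i : meshCubesMeeting δ S, Metric.ediam (meshCube δ i.1.1 i.1.2.1 i.1.2.2) ^ t ≤
        ENNReal.ofReal (C * δ ^ (t - s)) := by
    filter_upwards [h, self_mem_nhdsWithin] with δ ⟨hfin, hN⟩ (hδ : 0 < δ)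
    calc ∑' i : meshCubesMeeting δ S, Metric.ediam (meshCube δ i.1.1 i.1.2.1 i.1.2.2) ^ t
        ≤ ∑' _ : meshCubesMeeting δ S, ENNReal.ofReal δ ^ t :=
          ENNReal.tsum_le_tsum fun i =>
            ENNReal.rpow_le_rpow (ediam_meshCube_le _ _ _) (by linarith)
      _ = ENNReal.ofReal (meshCount δ S * δ ^ t) := by
          rw [ENNReal.tsum_set_const, ← hfin.cast_ncard_eq, meshCount_eq_ncard,
            ENNReal.ofReal_mul (Nat.cast_nonneg _), ENNReal.ofReal_natCast,
            ENNReal.ofReal_rpow_of_pos hδ]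
          rfl
      _ ≤ ENNReal.ofReal (C / δ ^ s * δ ^ t) :=
          ENNReal.ofReal_le_ofReal (mul_le_mul_of_nonneg_right hN (by positivity))
      _ = ENNReal.ofReal (C * δ ^ (t - s)) := by
          rw [Real.rpow_sub hδ, mul_div_assoc', div_mul_eq_mul_div]
  have hbound : Tendsto (fun δ : ℝ => ENNReal.ofReal (C * δ ^ (t - s))) (𝓝[>] 0) (𝓝 0) := by
    have hpow : Tendsto (fun δ : ℝ => δ ^ (t - s)) (𝓝[>] 0) (𝓝 0) := by
      simpa [Real.zero_rpow (sub_pos.2 hst).ne'] using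
        ((Real.continuous_rpow_const (sub_pos.2 hst).le).tendsto 0).mono_left nhdsWithin_le_nhds
    simpa using ENNReal.tendsto_ofReal (hpow.const_mul C)
  refine le_zero_iff.1 (hle.trans ?_)
  exact (liminf_le_liminf hsum).trans hbound.liminf_eq.le

lemma dimH_le_of_meshCount_le {S : Set (ℝ × ℝ × ℝ)} {s : ℝ≥0} {C : ℝ}
    (h : ∀ᶠ δ in 𝓝[>] 0, (meshCubesMeeting δ S).Finite ∧ (meshCount δ S : ℝ) ≤ C / δ ^ (s : ℝ)) :
    dimH S ≤ s :=
  dimH_le fun t ht => le_of_not_gt fun hst => by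
    rw [hausdorffMeasure_eq_zero_of_meshCount_le s.2 (by exact_mod_cast hst) h] at ht
    exact ENNReal.zero_ne_top ht

lemma tendsto_log_div_neg_log_of_bounds {N : ℝ → ℝ} {c C s : ℝ} (hc : 0 < c)
    (h : ∀ᶠ δ in 𝓝[>] 0, c / δ ^ s ≤ N δ ∧ N δ ≤ C / δ ^ s) :
    Tendsto (fun δ => Real.log (N δ) / -Real.log δ) (𝓝[>] 0) (𝓝 s) := by
  have hlim : ∀ w, Tendsto (fun δ => s + w / -Real.log δ) (𝓝[>] 0) (𝓝 s) := fun w => by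
    simpa using tendsto_const_nhds.add (tendsto_const_nhds.div_atTop
      (tendsto_neg_atBot_atTop.comp Real.tendsto_log_nhdsGT_zero))
  have hbounds : ∀ᶠ δ in 𝓝[>] 0, s + Real.log c / -Real.log δ ≤ Real.log (N δ) / -Real.log δ ∧
      Real.log (N δ) / -Real.log δ ≤ s + Real.log C / -Real.log δ := by
    filter_upwards [h, Ioo_mem_nhdsGT one_pos] with δ ⟨hlo, hhi⟩ ⟨hδ, hδ₁⟩
    have hL : 0 < -Real.log δ := neg_pos.2 (Real.log_neg hδ hδ₁)
    have hpow : 0 < δ ^ s := Real.rpow_pos_of_pos hδ s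
    have hN : 0 < N δ := (div_pos hc hpow).trans_le hlo
    have hC : 0 < C := (div_pos_iff_of_pos_right hpow).1 (hN.trans_le hhi)
    have hlog : ∀ w, 0 < w → Real.log (w / δ ^ s) = Real.log w + s * -Real.log δ := fun w hw => by
      rw [Real.log_div hw.ne' hpow.ne', Real.log_rpow hδ]; ring
    have hdiv : ∀ w, s + w / -Real.log δ = (w + s * -Real.log δ) / -Real.log δ := fun w => by
      rw [add_div, mul_div_assoc, div_self hL.ne', mul_one, add_comm]
    rw [hdiv, hdiv, div_le_div_iff_of_pos_right hL, div_le_div_iff_of_pos_right hL,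
      ← hlog c hc, ← hlog C hC]
    exact ⟨Real.log_le_log (div_pos hc hpow) hlo, Real.log_le_log hN hhi⟩
  exact tendsto_of_tendsto_of_tendsto_of_le_of_le' (hlim _) (hlim _) (hbounds.mono fun _ h => h.1)
    (hbounds.mono fun _ h => h.2)

section Graph

variable {a b c d δ : ℝ} {f : ℝ → ℝ → ℝ}

lemma meshCubesMeeting_graphRect_subset (hδ : 0 < δ) {p q : ℤ → ℤ → ℝ × ℝ}
    (hext : ∀ i j, ∀ z ∈ meshCell (a, c) (b, d) δ i j,
      f (q i j).1 (q i j).2 ≤ f z.1 z.2 ∧ f z.1 z.2 ≤ f (p i j).1 (p i j).2) :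
    meshCubesMeeting δ (graphRect a b c d f) ⊆
      ↑((meshIdx δ a b ×ˢ meshIdx δ c d).biUnion fun ij => {ij.1} ×ˢ {ij.2} ×ˢ
        meshIdx δ (f (q ij.1 ij.2).1 (q ij.1 ij.2).2) (f (p ij.1 ij.2).1 (p ij.1 ij.2).2)) := by
  rintro ⟨i, j, k⟩ ⟨x, ⟨hxi, hxj, hxk⟩, hxa, hxc, hxf⟩
  have hz : (x.1, x.2.1) ∈ meshCell (a, c) (b, d) δ i j :=
    mem_meshCell ⟨⟨hxa.1, hxc.1⟩, hxa.2, hxc.2⟩ ⟨hxi.1, hxj.1⟩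
      (by simp only [meshPt]; push_cast; exact ⟨hxi.2, hxj.2⟩)
  have hk := mem_meshIdx hδ (hxf ▸ hext i j _ hz) hxk
  simp only [Finset.coe_biUnion, Finset.coe_product, mem_iUnion, Finset.mem_coe, mem_prod,
    Finset.coe_singleton, mem_singleton_iff]
  exact ⟨(i, j), ⟨mem_meshIdx hδ hxa hxi, mem_meshIdx hδ hxc hxj⟩, rfl, rfl, hk⟩

lemma meshCount_graphRect_le_sum (hδ : 0 < δ) {p q : ℤ → ℤ → ℝ × ℝ}
    (hp : ∀ i j, p i j ∈ meshCell (a, c) (b, d) δ i j)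
    (hext : ∀ i j, ∀ z ∈ meshCell (a, c) (b, d) δ i j,
      f (q i j).1 (q i j).2 ≤ f z.1 z.2 ∧ f z.1 z.2 ≤ f (p i j).1 (p i j).2) :
    (meshCubesMeeting δ (graphRect a b c d f)).Finite ∧
      (meshCount δ (graphRect a b c d f) : ℝ) ≤ ∑ ij ∈ meshIdx δ a b ×ˢ meshIdx δ c d,
        ((f (p ij.1 ij.2).1 (p ij.1 ij.2).2 - f (q ij.1 ij.2).1 (q ij.1 ij.2).2) / δ + 2) := by
  have hsub := meshCubesMeeting_graphRect_subset hδ hext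
  refine ⟨(Finset.finite_toSet _).subset hsub, ?_⟩
  have hcard : meshCount δ (graphRect a b c d f) ≤ ∑ ij ∈ meshIdx δ a b ×ˢ meshIdx δ c d,
      (meshIdx δ (f (q ij.1 ij.2).1 (q ij.1 ij.2).2) (f (p ij.1 ij.2).1 (p ij.1 ij.2).2)).card := by
    rw [meshCount_eq_ncard]
    refine (ncard_le_ncard hsub (Finset.finite_toSet _)).trans ?_
    rw [ncard_coe_finset]
    refine Finset.card_biUnion_le.trans_eq (Finset.sum_congr rfl fun ij _ => ?_)
    simp
  calc (meshCount δ (graphRect a b c d f) : ℝ)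
      ≤ ∑ ij ∈ meshIdx δ a b ×ˢ meshIdx δ c d, ((meshIdx δ (f (q ij.1 ij.2).1 (q ij.1 ij.2).2)
          (f (p ij.1 ij.2).1 (p ij.1 ij.2).2)).card : ℝ) := by exact_mod_cast hcard
    _ ≤ _ := Finset.sum_le_sum fun ij _ => card_meshIdx_le hδ (hext ij.1 ij.2 _ (hp ij.1 ij.2)).1

lemma meshCount_graphRect_le {M : ℝ} (hab : a ≤ b) (hcd : c ≤ d)
    (hf : ContinuousOn (fun pt : ℝ × ℝ => f pt.1 pt.2) (Icc a b ×ˢ Icc c d))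
    (hV : ChainVariationLE (fun pt : ℝ × ℝ => f pt.1 pt.2) (Icc (a, c) (b, d)) M)
    (hδ : 0 < δ) (hδ₁ : δ ≤ 1) :
    (meshCubesMeeting δ (graphRect a b c d f)).Finite ∧
      (meshCount δ (graphRect a b c d f) : ℝ) ≤
        (2 * M * ((b - a) + (d - c) + 4) + 2 * ((b - a) + 2) * ((d - c) + 2)) / δ ^ 2 := by
  have hlu : (a, c) ≤ (b, d) := ⟨hab, hcd⟩
  rw [Icc_prod_Icc] at hf
  choose p hp q hq hext using exists_extrema_meshCell hlu hδ.le hf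
  obtain ⟨hfin, hN⟩ := meshCount_graphRect_le_sum hδ hp hext
  refine ⟨hfin, ?_⟩
  set I := meshIdx δ a b
  set J := meshIdx δ c d
  have hosc : ∑ ij ∈ I ×ˢ J, (f (p ij.1 ij.2).1 (p ij.1 ij.2).2 - f (q ij.1 ij.2).1 (q ij.1 ij.2).2)
      ≤ (I.card + J.card) * (2 * M) :=
    hV.sum_sub_box_le hlu hp hq (fun i j => (hext i j _ (hp i j)).1) _ _ _ _
  rw [Finset.sum_add_distrib, ← Finset.sum_div, Finset.sum_const, Finset.card_product,
    nsmul_eq_mul, Nat.cast_mul, mul_comm _ (2 : ℝ)] at hN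
  have hM : 0 ≤ M := hV.nonneg ⟨le_rfl, hlu⟩
  have hscaled : ∀ {x y : ℝ}, x ≤ y → δ * (meshIdx δ x y).card ≤ (y - x) + 2 := fun hxy => by
    have := mul_le_mul_of_nonneg_left (card_meshIdx_le hδ hxy) hδ.le
    rw [mul_add, mul_div_cancel₀ _ hδ.ne'] at this
    linarith
  rw [le_div_iff₀ (by positivity)]
  calc (meshCount δ (graphRect a b c d f) : ℝ) * δ ^ 2
      ≤ ((I.card + J.card) * (2 * M) / δ + 2 * (I.card * J.card)) * δ ^ 2 := by
        gcongr
        exact hN.trans (by gcongr)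
    _ = (δ * I.card + δ * J.card) * (2 * M) + 2 * ((δ * I.card) * (δ * J.card)) := by
        field_simp
    _ ≤ (((b - a) + 2) + ((d - c) + 2)) * (2 * M) + 2 * (((b - a) + 2) * ((d - c) + 2)) := by
        gcongr
        exacts [hscaled hab, hscaled hcd, hscaled hab, hscaled hcd]
    _ = _ := by ring

/-- Each grid point `(iδ, jδ)` of the rectangle lies under its own cube of the graph. -/
lemma meshCount_graphRect_ge (f : ℝ → ℝ → ℝ) (hδ : 0 < δ) (hδa : 2 * δ ≤ b - a)
    (hδc : 2 * δ ≤ d - c) (hfin : (meshCubesMeeting δ (graphRect a b c d f)).Finite) :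
    (b - a) * (d - c) / 4 / δ ^ 2 ≤ meshCount δ (graphRect a b c d f) := by
  set I := Finset.Icc ⌈a / δ⌉ ⌊b / δ⌋
  set J := Finset.Icc ⌈c / δ⌉ ⌊d / δ⌋
  have hgrid : ∀ {x y : ℝ} {i : ℤ}, i ∈ Finset.Icc ⌈x / δ⌉ ⌊y / δ⌋ → (i : ℝ) * δ ∈ Icc x y :=
    fun hi => by
      rw [Finset.mem_Icc, Int.ceil_le, Int.le_floor, div_le_iff₀ hδ, le_div_iff₀ hδ] at hi
      exact hi
  have hcard : (I ×ˢ J).card ≤ meshCount δ (graphRect a b c d f) := by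
    rw [meshCount_eq_ncard, ncard_eq_toFinset_card _ hfin]
    refine Finset.card_le_card_of_injOn
      (fun ij => cubeIdx δ (ij.1 * δ, ij.2 * δ, f (ij.1 * δ) (ij.2 * δ))) (fun ij hij => ?_) ?_
    · rw [Finset.coe_product, mem_prod] at hij
      exact hfin.mem_toFinset.2
        (cubeIdx_mem_meshCubesMeeting hδ ⟨hgrid hij.1, hgrid hij.2, rfl⟩)
    · intro ij _ ij' _ h
      simp only [cubeIdx, Prod.mk.injEq, mul_div_cancel_right₀ _ hδ.ne', Int.floor_intCast] at h
      exact Prod.ext h.1 h.2.1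
  have hhalf : ∀ {x y : ℝ}, 2 * δ ≤ y - x →
      0 ≤ (y - x) / δ / 2 ∧ (y - x) / δ / 2 ≤ (y - x) / δ - 1 := fun {x y} h => by
      have : 2 ≤ (y - x) / δ := by rw [le_div_iff₀ hδ]; linarith
      constructor <;> linarith
  calc (b - a) * (d - c) / 4 / δ ^ 2 = (b - a) / δ / 2 * ((d - c) / δ / 2) := by
        field_simp; ring
    _ ≤ ((b - a) / δ - 1) * ((d - c) / δ - 1) :=
        mul_le_mul (hhalf hδa).2 (hhalf hδc).2 (hhalf hδc).1 (by linarith [hhalf hδa])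
    _ ≤ I.card * J.card :=
        mul_le_mul (sub_div_sub_one_le_card_Icc δ a b) (sub_div_sub_one_le_card_Icc δ c d)
          (by linarith [hhalf hδc]) (Nat.cast_nonneg _)
    _ ≤ meshCount δ (graphRect a b c d f) := by
        rw [Finset.card_product] at hcard
        exact_mod_cast hcard

lemma two_le_dimH_graphRect (hab : a < b) (hcd : c < d) (f : ℝ → ℝ → ℝ) :
    2 ≤ dimH (graphRect a b c d f) := by
  set π : ℝ × ℝ × ℝ → ℝ × ℝ := fun x => (x.1, x.2.1)
  have hproj : LipschitzWith 1 π := by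
    simpa using LipschitzWith.prod_fst.prodMk (LipschitzWith.prod_fst.comp LipschitzWith.prod_snd)
  have himage : π '' graphRect a b c d f = Icc a b ×ˢ Icc c d := by
    ext w
    constructor
    · rintro ⟨x, ⟨hx, hy, -⟩, rfl⟩
      exact ⟨hx, hy⟩
    · rintro ⟨hx, hy⟩
      exact ⟨(w.1, w.2, f w.1 w.2), ⟨hx, hy, rfl⟩, rfl⟩
  have hrect : dimH (Icc a b ×ˢ Icc c d) = 2 := by
    rw [Real.dimH_of_nonempty_interior]
    · simp
    · rw [interior_prod_eq, interior_Icc, interior_Icc]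
      exact (nonempty_Ioo.2 hab).prod (nonempty_Ioo.2 hcd)
  rw [← hrect, ← himage]
  exact hproj.dimH_image_le _

end Graph

/-- a continuous function of bounded variation in the sense of
Arzelà has graph of box dimension and Hausdorff dimension `2`. -/
theorem dim_graph_continuous_arzelaBV (a b c d : ℝ) (hab : a < b) (hcd : c < d)
    (f : ℝ → ℝ → ℝ)
    (hf : ContinuousOn (fun pt : ℝ × ℝ => f pt.1 pt.2) (Icc a b ×ˢ Icc c d))
    (hbv : ArzelaBV a b c d f) :
    lowerBoxDim (graphRect a b c d f) = 2 ∧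
    upperBoxDim (graphRect a b c d f) = 2 ∧
    dimH (graphRect a b c d f) = 2 := by
  obtain ⟨M, hV⟩ := hbv.exists_chainVariationLE
  set G := graphRect a b c d f
  set C := 2 * M * ((b - a) + (d - c) + 4) + 2 * ((b - a) + 2) * ((d - c) + 2)
  have hupper : ∀ᶠ δ in 𝓝[>] 0,
      (meshCubesMeeting δ G).Finite ∧ (meshCount δ G : ℝ) ≤ C / δ ^ 2 := by
    filter_upwards [Ioc_mem_nhdsGT one_pos] with δ ⟨hδ, hδ₁⟩
    exact meshCount_graphRect_le hab.le hcd.le hf hV hδ hδ₁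
  have hlower : ∀ᶠ δ in 𝓝[>] 0, (b - a) * (d - c) / 4 / δ ^ 2 ≤ meshCount δ G := by
    filter_upwards [hupper, Ioo_mem_nhdsGT (half_pos (sub_pos.2 hab)),
      Ioo_mem_nhdsGT (half_pos (sub_pos.2 hcd))] with δ hup ⟨hδ, hδa⟩ ⟨_, hδc⟩
    exact meshCount_graphRect_ge f hδ (by linarith) (by linarith) hup.1
  have htend :
      Tendsto (fun δ => Real.log (meshCount δ G) / -Real.log δ) (𝓝[>] 0) (𝓝 2) := by
    refine tendsto_log_div_neg_log_of_bounds (c := (b - a) * (d - c) / 4) (C := C)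
      (div_pos (mul_pos (sub_pos.2 hab) (sub_pos.2 hcd)) four_pos) ?_
    filter_upwards [hlower, hupper] with δ hlo hup
    simpa only [Real.rpow_two] using ⟨hlo, hup.2⟩
  refine ⟨htend.liminf_eq, htend.limsup_eq, le_antisymm ?_ (two_le_dimH_graphRect hab hcd f)⟩
  exact_mod_cast dimH_le_of_meshCount_le (s := 2)
    (by simpa only [NNReal.coe_ofNat, Real.rpow_two] using hupper)
end

section
/- Let 0 < a < b < ∞, 0 < c < d < ∞, -1 < p, q ≤ 0 and 0 < α, β < 1, and set γ = min{α, β}. If f : [a,b] × [c,d] → ℝ is continuous, then its mixed Katugampola fractional integral I f satisfies a Hölder condition of exponent γ: there is a constant C > 0 such that |(I f)(x+h, y+k) - (I f)(x,y)| ≤ C ‖(h,k)‖₂^{γ} for all points (x,y) and (x+h, y+k) in [a,b] × [c,d] with h, k ≥ 0 sufficiently small. -/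
open MeasureTheory Set Filter
open scoped Classical

/-!
Write `I f (x, y)` as the iterated one-dimensional integral `KI a p α (s ↦ KI c q β (f s) y) x`
with kernel `K_x(s) = (x^{p+1} - s^{p+1})^{α-1} s^p`, whose primitive
`-(x^{p+1} - s^{p+1})^α / ((p+1)α)` is explicit. For `α ≤ 1` the kernel decreases in `x`, so for
`|g|, |g'| ≤ M` and `|g' - g| ≤ E`, splitting `∫_a^{x'} K_{x'} g' - ∫_a^x K_x g` at `x` bounds it
by `E ∫_a^{x'} K_{x'} + 2M (x'^{p+1} - x^{p+1})^α / ((p+1)α)`. Used once for the inner variable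
(with `g = g'`) and once for the outer one, together with the mean value bound
`x'^{p+1} - x^{p+1} ≤ (p+1) a^p (x' - x)` for `p ≤ 0`, this gives `A h^α + B k^β`, which is at most
`(A + B) ‖(h, k)‖^{min α β}` once `‖(h, k)‖ ≤ 1`.
-/

open Real intervalIntegral

lemma abs_mul_sub_mul_le {k k' u u' M E : ℝ} (hk' : 0 ≤ k') (hk'k : k' ≤ k) (hu : |u| ≤ M)
    (hu'u : |u' - u| ≤ E) : |k' * u' - k * u| ≤ E * k' + M * (k - k') := by
  calc |k' * u' - k * u| = |k' * (u' - u) - (k - k') * u| := by ring_nf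
    _ ≤ |k' * (u' - u)| + |(k - k') * u| := abs_sub _ _
    _ = k' * |u' - u| + (k - k') * |u| := by
      rw [abs_mul, abs_mul, abs_of_nonneg hk', abs_of_nonneg (sub_nonneg.2 hk'k)]
    _ ≤ k' * E + (k - k') * M := by gcongr
    _ = E * k' + M * (k - k') := by ring

lemma rpow_sub_rpow_le_mul_sub {r a x x' : ℝ} (hr0 : 0 ≤ r) (hr1 : r ≤ 1) (ha : 0 < a)
    (hax : a ≤ x) (hxx' : x ≤ x') : x' ^ r - x ^ r ≤ r * a ^ (r - 1) * (x' - x) := by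
  have hderiv : ∀ t ∈ Ioi a, HasDerivAt (fun t => t ^ r) (r * t ^ (r - 1)) t := fun t ht =>
    hasDerivAt_rpow_const (Or.inl (ha.trans ht).ne')
  refine (convex_Ici a).image_sub_le_mul_sub_of_deriv_le
    (fun t ht => (continuousAt_rpow_const _ _ (Or.inl (ha.trans_le ht).ne')).continuousWithinAt)
    (fun t ht => ?_) (fun t ht => ?_) x hax x' (hax.trans hxx') hxx'
  · rw [interior_Ici] at ht
    exact (hderiv t ht).differentiableAt.differentiableWithinAt
  · rw [interior_Ici] at ht
    rw [(hderiv t ht).deriv]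
    exact mul_le_mul_of_nonneg_left (rpow_le_rpow_of_nonpos ha ht.le (by linarith)) hr0

lemma rpow_le_rpow_of_le_of_le_one {h ρ α γ : ℝ} (h0 : 0 ≤ h) (hhρ : h ≤ ρ) (hρ1 : ρ ≤ 1)
    (hγ : 0 ≤ γ) (hγα : γ ≤ α) : h ^ α ≤ ρ ^ γ :=
  (rpow_le_rpow h0 hhρ (hγ.trans hγα)).trans
    (rpow_le_rpow_of_exponent_ge' (h0.trans hhρ) hρ1 hγ hγα)

lemma exists_continuous_bounded_extension {a b c d : ℝ} (hab : a ≤ b) (hcd : c ≤ d)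
    {f : ℝ → ℝ → ℝ} (hf : ContinuousOn (fun pt : ℝ × ℝ => f pt.1 pt.2) (Icc a b ×ˢ Icc c d)) :
    ∃ F : ℝ → ℝ → ℝ, Continuous (Function.uncurry F) ∧ (∃ M, ∀ s t, |F s t| ≤ M) ∧
      ∀ s ∈ Icc a b, ∀ t ∈ Icc c d, F s t = f s t := by
  obtain ⟨M, hM⟩ := (isCompact_Icc.prod isCompact_Icc).exists_bound_of_continuousOn hf
  have hproj : ∀ pt : ℝ × ℝ,
      ((projIcc a b hab pt.1 : ℝ), (projIcc c d hcd pt.2 : ℝ)) ∈ Icc a b ×ˢ Icc c d :=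
    fun pt => ⟨(projIcc a b hab pt.1).2, (projIcc c d hcd pt.2).2⟩
  refine ⟨fun s t => f (projIcc a b hab s) (projIcc c d hcd t),
    hf.comp_continuous (by fun_prop) hproj, ⟨M, fun s t => hM _ (hproj (s, t))⟩,
    fun s hs t ht => by simp [projIcc_of_mem hab hs, projIcc_of_mem hcd ht]⟩

namespace Katugampola

/-- The integrand of `KI`: `KI a p α g x` unfolds to
`(p + 1) ^ (1 - α) / Gamma α * ∫ t in a..x, kernel p α x t * g t`. -/
noncomputable def kernel (p α x s : ℝ) : ℝ := (x ^ (p + 1) - s ^ (p + 1)) ^ (α - 1) * s ^ p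

noncomputable def kernelMass (p α x s : ℝ) : ℝ := (x ^ (p + 1) - s ^ (p + 1)) ^ α / ((p + 1) * α)

variable {a b c d p q α β x x' y y' s l r u M E : ℝ} {g g' : ℝ → ℝ}

lemma kernel_nonneg (hp : 0 ≤ p + 1) (hs : 0 ≤ s) (hsx : s ≤ x) : 0 ≤ kernel p α x s :=
  mul_nonneg (rpow_nonneg (sub_nonneg.2 (rpow_le_rpow hs hsx hp)) _) (rpow_nonneg hs _)

lemma kernel_le_kernel (hp : 0 < p + 1) (hα1 : α ≤ 1) (hs : 0 < s) (hsx : s < x)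
    (hxx' : x ≤ x') : kernel p α x' s ≤ kernel p α x s := by
  have hlt : s ^ (p + 1) < x ^ (p + 1) := rpow_lt_rpow hs.le hsx hp
  have hle : x ^ (p + 1) ≤ x' ^ (p + 1) := rpow_le_rpow (hs.trans hsx).le hxx' hp.le
  exact mul_le_mul_of_nonneg_right
    (rpow_le_rpow_of_nonpos (by linarith) (by linarith) (by linarith)) (rpow_nonneg hs.le _)

lemma kernelMass_nonneg (hp : 0 ≤ p + 1) (hα : 0 ≤ α) (hs : 0 ≤ s) (hsx : s ≤ x) :
    0 ≤ kernelMass p α x s :=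
  div_nonneg (rpow_nonneg (sub_nonneg.2 (rpow_le_rpow hs hsx hp)) _) (mul_nonneg hp hα)

lemma kernelMass_le_kernelMass (hp : 0 ≤ p + 1) (hα : 0 ≤ α) (hs : 0 ≤ s) (hsx : s ≤ x)
    (hxx' : x ≤ x') : kernelMass p α x s ≤ kernelMass p α x' s := by
  have hsub : x ^ (p + 1) - s ^ (p + 1) ≤ x' ^ (p + 1) - s ^ (p + 1) :=
    sub_le_sub_right (rpow_le_rpow (hs.trans hsx) hxx' hp) _
  exact div_le_div_of_nonneg_right
    (rpow_le_rpow (sub_nonneg.2 (rpow_le_rpow hs hsx hp)) hsub hα) (mul_nonneg hp hα)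

lemma kernelMass_self (hα : α ≠ 0) : kernelMass p α x x = 0 := by
  simp [kernelMass, hα]

lemma continuous_kernelMass (hp : 0 ≤ p + 1) (hα : 0 ≤ α) : Continuous (kernelMass p α x) :=
  ((continuous_const.sub (continuous_rpow_const hp)).rpow_const fun _ => Or.inr hα).div_const _

lemma hasDerivAt_kernelMass (hp : 0 < p + 1) (hα : 0 < α) (hs : 0 < s) (hsx : s < x) :
    HasDerivAt (kernelMass p α x) (-kernel p α x s) s := by
  have hpos : 0 < x ^ (p + 1) - s ^ (p + 1) := sub_pos.2 (rpow_lt_rpow hs.le hsx hp)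
  have hinner : HasDerivAt (fun s => x ^ (p + 1) - s ^ (p + 1)) (-((p + 1) * s ^ p)) s := by
    simpa using (hasDerivAt_rpow_const (p := p + 1) (Or.inl hs.ne')).const_sub (x ^ (p + 1))
  refine (((hasDerivAt_rpow_const (Or.inl hpos.ne')).comp s hinner).div_const
    ((p + 1) * α)).congr_deriv ?_
  simp only [kernel]
  field_simp

lemma hasDerivAt_neg_kernelMass (hp : 0 < p + 1) (hα : 0 < α) (hs : 0 < s) (hsx : s < x) :
    HasDerivAt (-kernelMass p α x) (kernel p α x s) s := by
  simpa using (hasDerivAt_kernelMass hp hα hs hsx).neg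

lemma intervalIntegrable_kernel (hp : 0 < p + 1) (hα : 0 < α) (hl : 0 < l) (hlr : l ≤ r)
    (hrx : r ≤ x) : IntervalIntegrable (kernel p α x) volume l r := by
  refine intervalIntegrable_deriv_of_nonneg
    (continuous_kernelMass (x := x) hp.le hα.le).neg.continuousOn (fun s hs => ?_)
    (fun s hs => ?_) <;> rw [min_eq_left hlr, max_eq_right hlr] at hs
  · exact hasDerivAt_neg_kernelMass hp hα (hl.trans hs.1) (hs.2.trans_le hrx)
  · exact kernel_nonneg hp.le (hl.trans hs.1).le (hs.2.trans_le hrx).le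

lemma integral_kernel (hp : 0 < p + 1) (hα : 0 < α) (hl : 0 < l) (hlr : l ≤ r) (hrx : r ≤ x) :
    ∫ s in l..r, kernel p α x s = kernelMass p α x l - kernelMass p α x r := by
  rw [integral_eq_sub_of_hasDeriv_right_of_le hlr
    (continuous_kernelMass (x := x) hp.le hα.le).neg.continuousOn
    (fun s hs => (hasDerivAt_neg_kernelMass hp hα (hl.trans hs.1)
      (hs.2.trans_le hrx)).hasDerivWithinAt)
    (intervalIntegrable_kernel hp hα hl hlr hrx)]
  simp only [Pi.neg_apply]
  ring

lemma measurable_kernel : Measurable (kernel p α x) := by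
  unfold kernel
  fun_prop

lemma abs_kernel_mul_le (hp : 0 ≤ p + 1) (hs : 0 ≤ s) (hsx : s ≤ x) (hu : |u| ≤ M) :
    |kernel p α x s * u| ≤ M * kernel p α x s := by
  rw [abs_mul, abs_of_nonneg (kernel_nonneg hp hs hsx), mul_comm]
  exact mul_le_mul_of_nonneg_right hu (kernel_nonneg hp hs hsx)

lemma intervalIntegrable_kernel_mul (hp : 0 < p + 1) (hα : 0 < α) (hl : 0 < l) (hlr : l ≤ r)
    (hrx : r ≤ x) (hg : Measurable g) (hgM : ∀ s, |g s| ≤ M) :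
    IntervalIntegrable (fun s => kernel p α x s * g s) volume l r := by
  refine ((intervalIntegrable_kernel hp hα hl hlr hrx).const_mul M).mono_fun'
    ((measurable_kernel.mul hg).aestronglyMeasurable) ?_
  rw [uIoc_of_le hlr]
  exact (ae_restrict_iff' measurableSet_Ioc).2 (Eventually.of_forall fun s hs =>
    abs_kernel_mul_le hp.le (hl.trans hs.1).le (hs.2.trans hrx) (hgM s))

lemma abs_integral_kernel_mul_le (hp : 0 < p + 1) (hα : 0 < α) (hl : 0 < l) (hlx : l ≤ x)
    (hgM : ∀ s, |g s| ≤ M) :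
    |∫ s in l..x, kernel p α x s * g s| ≤ M * kernelMass p α x l := by
  have hbound := norm_integral_le_of_norm_le (f := fun s => kernel p α x s * g s) hlx
    (Eventually.of_forall fun s (hs : s ∈ Ioc l x) =>
      abs_kernel_mul_le (α := α) hp.le (hl.trans hs.1).le hs.2 (hgM s))
    ((intervalIntegrable_kernel hp hα hl hlx le_rfl).const_mul M)
  rwa [Real.norm_eq_abs, intervalIntegral.integral_const_mul, integral_kernel hp hα hl hlx le_rfl,
    kernelMass_self hα.ne', sub_zero] at hbound

theorem abs_integral_kernel_mul_sub_le (hp : 0 < p + 1) (hα : 0 < α) (hα1 : α ≤ 1) (ha : 0 < a)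
    (hax : a ≤ x) (hxx' : x ≤ x') (hg : Measurable g) (hg' : Measurable g')
    (hgM : ∀ s, |g s| ≤ M) (hg'M : ∀ s, |g' s| ≤ M) (hE : ∀ s, |g' s - g s| ≤ E) :
    |(∫ s in a..x', kernel p α x' s * g' s) - ∫ s in a..x, kernel p α x s * g s| ≤
      E * kernelMass p α x' a + 2 * M * kernelMass p α x' x := by
  have hM : 0 ≤ M := (abs_nonneg _).trans (hgM 0)
  have hE0 : 0 ≤ E := (abs_nonneg _).trans (hE 0)
  have hx : 0 < x := ha.trans_le hax
  have I' := intervalIntegrable_kernel_mul hp hα ha hax hxx' hg' hg'M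
  have I := intervalIntegrable_kernel_mul hp hα ha hax le_rfl hg hgM
  have K' := intervalIntegrable_kernel (α := α) hp hα ha hax hxx'
  have K := intervalIntegrable_kernel (α := α) hp hα ha hax le_rfl
  have hsplit : (∫ s in a..x', kernel p α x' s * g' s) - ∫ s in a..x, kernel p α x s * g s =
      (∫ s in a..x, kernel p α x' s * g' s - kernel p α x s * g s) +
        ∫ s in x..x', kernel p α x' s * g' s := by
    rw [← integral_add_adjacent_intervals I'
      (intervalIntegrable_kernel_mul hp hα hx hxx' le_rfl hg' hg'M), integral_sub I' I]
    ring
  have hnear := norm_integral_le_of_norm_le hax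
    (f := fun s => kernel p α x' s * g' s - kernel p α x s * g s)
    (g := fun s => E * kernel p α x' s + M * (kernel p α x s - kernel p α x' s))
    (by
      -- `kernel p α x x` is the junk value `0 ^ (α - 1) = 0`, so the kernels compare only off `x`.
      filter_upwards [Measure.ae_ne volume x] with s hsx hs
      exact abs_mul_sub_mul_le (kernel_nonneg hp.le (ha.trans hs.1).le (hs.2.trans hxx'))
        (kernel_le_kernel hp hα1 (ha.trans hs.1) (lt_of_le_of_ne hs.2 hsx) hxx') (hgM s) (hE s))
    ((K'.const_mul E).add ((K.sub K').const_mul M))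
  rw [intervalIntegral.integral_add (K'.const_mul E) ((K.sub K').const_mul M),
    intervalIntegral.integral_const_mul, intervalIntegral.integral_const_mul,
    intervalIntegral.integral_sub K K', integral_kernel hp hα ha hax hxx',
    integral_kernel hp hα ha hax le_rfl, kernelMass_self hα.ne', Real.norm_eq_abs] at hnear
  have hfar := abs_integral_kernel_mul_le hp hα hx hxx' hg'M
  have hmono := kernelMass_le_kernelMass (α := α) hp.le hα.le ha.le hax hxx'
  have hpos := kernelMass_nonneg (α := α) hp.le hα.le hx.le hxx'
  rw [hsplit]
  refine (abs_add_le _ _).trans ?_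
  nlinarith [mul_nonneg hE0 hpos, mul_le_mul_of_nonneg_left hmono hM]

lemma kernelMass_le_mul_rpow_sub (hp : 0 < p + 1) (hp0 : p ≤ 0) (hα : 0 ≤ α) (ha : 0 < a)
    (hax : a ≤ x) (hxx' : x ≤ x') :
    kernelMass p α x' x ≤ ((p + 1) * a ^ p) ^ α / ((p + 1) * α) * (x' - x) ^ α := by
  have hsub := rpow_sub_rpow_le_mul_sub hp.le (by linarith) ha hax hxx'
  rw [add_sub_cancel_right] at hsub
  rw [kernelMass, div_mul_eq_mul_div, ← mul_rpow (by positivity) (by linarith)]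
  exact div_le_div_of_nonneg_right (rpow_le_rpow
    (sub_nonneg.2 (rpow_le_rpow (ha.trans_le hax).le hxx' hp.le)) hsub hα) (mul_nonneg hp.le hα)

lemma coeff_pos (hp : 0 < p + 1) (hα : 0 < α) : 0 < (p + 1) ^ (1 - α) / Gamma α :=
  div_pos (rpow_pos_of_pos hp _) (Gamma_pos_of_pos hα)

lemma abs_KI_le (hp : 0 < p + 1) (hα : 0 < α) (ha : 0 < a) (hax : a ≤ x)
    (hgM : ∀ s, |g s| ≤ M) :
    |KI a p α g x| ≤ (p + 1) ^ (1 - α) / Gamma α * (M * kernelMass p α x a) := by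
  have hconst := coeff_pos hp hα
  rw [KI, abs_mul, abs_of_pos hconst]
  exact mul_le_mul_of_nonneg_left (abs_integral_kernel_mul_le hp hα ha hax hgM) hconst.le

lemma abs_KI_sub_le (hp : 0 < p + 1) (hα : 0 < α) (hα1 : α ≤ 1) (ha : 0 < a)
    (hax : a ≤ x) (hxx' : x ≤ x') (hg : Measurable g) (hg' : Measurable g')
    (hgM : ∀ s, |g s| ≤ M) (hg'M : ∀ s, |g' s| ≤ M) (hE : ∀ s, |g' s - g s| ≤ E) :
    |KI a p α g' x' - KI a p α g x| ≤
      (p + 1) ^ (1 - α) / Gamma α * (E * kernelMass p α x' a + 2 * M * kernelMass p α x' x) := by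
  have hconst := coeff_pos hp hα
  rw [KI, KI, ← mul_sub, abs_mul, abs_of_pos hconst]
  exact mul_le_mul_of_nonneg_left
    (abs_integral_kernel_mul_sub_le hp hα hα1 ha hax hxx' hg hg' hgM hg'M hE) hconst.le

lemma continuous_KI_apply {F : ℝ → ℝ → ℝ} (hq : 0 < q + 1) (hβ : 0 < β) (hc : 0 < c)
    (hcy : c ≤ y) (hF : Continuous (Function.uncurry F)) (hFM : ∀ s t, |F s t| ≤ M) :
    Continuous fun s => KI c q β (F s) y := by
  refine continuous_const.mul (continuous_of_dominated_interval
    (bound := fun t => M * kernel q β y t) (fun s => ?_) (fun s => ?_)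
    ((intervalIntegrable_kernel hq hβ hc hcy le_rfl).const_mul M)
    (Eventually.of_forall fun t _ => ?_))
  · exact (measurable_kernel.mul
      (hF.comp (continuous_const.prodMk continuous_id)).measurable).aestronglyMeasurable
  · rw [uIoc_of_le hcy]
    exact Eventually.of_forall fun t ht =>
      abs_kernel_mul_le hq.le (hc.trans ht.1).le ht.2 (hFM s t)
  · exact continuous_const.mul (hF.comp (continuous_id.prodMk continuous_const))

lemma mixedKI_eq_KI_KI (f : ℝ → ℝ → ℝ) :
    mixedKI a c p q α β f x y = KI a p α (fun s => KI c q β (f s) y) x := by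
  simp only [mixedKI, KI, ← intervalIntegral.integral_const_mul]
  exact intervalIntegral.integral_congr fun s _ =>
    intervalIntegral.integral_congr fun t _ => by ring

lemma mixedKI_congr {f g : ℝ → ℝ → ℝ} (hax : a ≤ x) (hcy : c ≤ y)
    (hfg : ∀ s ∈ Icc a x, ∀ t ∈ Icc c y, f s t = g s t) :
    mixedKI a c p q α β f x y = mixedKI a c p q α β g x y := by
  unfold mixedKI
  congr 1
  refine intervalIntegral.integral_congr fun s hs => intervalIntegral.integral_congr fun t ht => ?_
  rw [uIcc_of_le hax] at hs
  rw [uIcc_of_le hcy] at ht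
  simp only [hfg s hs t ht]

theorem abs_mixedKI_sub_le {F : ℝ → ℝ → ℝ} (ha : 0 < a) (hc : 0 < c) (hp : 0 < p + 1)
    (hq : 0 < q + 1) (hα : 0 < α) (hα1 : α ≤ 1) (hβ : 0 < β) (hβ1 : β ≤ 1)
    (hF : Continuous (Function.uncurry F)) (hFM : ∀ s t, |F s t| ≤ M)
    (hax : a ≤ x) (hxx' : x ≤ x') (hcy : c ≤ y) (hyy' : y ≤ y') (hy'd : y' ≤ d) :
    |mixedKI a c p q α β F x' y' - mixedKI a c p q α β F x y| ≤
      (p + 1) ^ (1 - α) / Gamma α *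
        ((q + 1) ^ (1 - β) / Gamma β * (2 * M * kernelMass q β y' y) * kernelMass p α x' a +
          2 * ((q + 1) ^ (1 - β) / Gamma β * (M * kernelMass q β d c)) *
            kernelMass p α x' x) := by
  have hM : 0 ≤ M := (abs_nonneg _).trans (hFM 0 0)
  have hκq := coeff_pos hq hβ
  have hbound : ∀ Y, c ≤ Y → Y ≤ d → ∀ s,
      |KI c q β (F s) Y| ≤ (q + 1) ^ (1 - β) / Gamma β * (M * kernelMass q β d c) :=
    fun Y hcY hYd s => (abs_KI_le hq hβ hc hcY (hFM s)).trans
      (mul_le_mul_of_nonneg_left (mul_le_mul_of_nonneg_left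
        (kernelMass_le_kernelMass hq.le hβ.le hc.le hcY hYd) hM) hκq.le)
  have hcont : ∀ Y, c ≤ Y → Continuous fun s => KI c q β (F s) Y :=
    fun Y hcY => continuous_KI_apply hq hβ hc hcY hF hFM
  rw [mixedKI_eq_KI_KI, mixedKI_eq_KI_KI]
  refine abs_KI_sub_le hp hα hα1 ha hax hxx' (hcont y hcy).measurable
    (hcont y' (hcy.trans hyy')).measurable (hbound y hcy (hyy'.trans hy'd))
    (hbound y' (hcy.trans hyy') hy'd) fun s => ?_
  have hF_s : Measurable (F s) := (hF.comp (continuous_const.prodMk continuous_id)).measurable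
  simpa using abs_KI_sub_le (E := 0) hq hβ hβ1 hc hcy hyy' hF_s hF_s (hFM s) (hFM s)
    (fun t => by simp)

theorem exists_abs_mixedKI_sub_le (ha : 0 < a) (hab : a ≤ b) (hc : 0 < c) (hcd : c ≤ d)
    (hp : 0 < p + 1) (hp0 : p ≤ 0) (hq : 0 < q + 1) (hq0 : q ≤ 0)
    (hα : 0 < α) (hα1 : α ≤ 1) (hβ : 0 < β) (hβ1 : β ≤ 1) {f : ℝ → ℝ → ℝ}
    (hf : ContinuousOn (fun pt : ℝ × ℝ => f pt.1 pt.2) (Icc a b ×ˢ Icc c d)) :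
    ∃ A B : ℝ, 0 ≤ A ∧ 0 ≤ B ∧ ∀ x x' y y', a ≤ x → x ≤ x' → x' ≤ b → c ≤ y → y ≤ y' → y' ≤ d →
      |mixedKI a c p q α β f x' y' - mixedKI a c p q α β f x y| ≤
        A * (x' - x) ^ α + B * (y' - y) ^ β := by
  obtain ⟨F, hF, ⟨M, hFM⟩, hFf⟩ := exists_continuous_bounded_extension hab hcd hf
  have hM : 0 ≤ M := (abs_nonneg _).trans (hFM 0 0)
  have hfF : ∀ x ∈ Icc a b, ∀ y ∈ Icc c d,
      mixedKI a c p q α β f x y = mixedKI a c p q α β F x y := fun x hx y hy =>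
    mixedKI_congr hx.1 hy.1 fun s hs t ht =>
      (hFf s ⟨hs.1, hs.2.trans hx.2⟩ t ⟨ht.1, ht.2.trans hy.2⟩).symm
  set κp := (p + 1) ^ (1 - α) / Gamma α
  set κq := (q + 1) ^ (1 - β) / Gamma β
  set Lp := ((p + 1) * a ^ p) ^ α / ((p + 1) * α)
  set Lq := ((q + 1) * c ^ q) ^ β / ((q + 1) * β)
  have hκp : 0 < κp := coeff_pos hp hα
  have hκq : 0 < κq := coeff_pos hq hβ
  have hLp : 0 ≤ Lp := div_nonneg (rpow_nonneg (by positivity) _) (by positivity)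
  have hLq : 0 ≤ Lq := div_nonneg (rpow_nonneg (by positivity) _) (by positivity)
  have hmp := kernelMass_nonneg hp.le hα.le ha.le hab
  have hmq := kernelMass_nonneg hq.le hβ.le hc.le hcd
  refine ⟨κp * (2 * (κq * (M * kernelMass q β d c))) * Lp,
    κp * (κq * (2 * M * Lq)) * kernelMass p α b a, by positivity, by positivity,
    fun x x' y y' hax hxx' hx'b hcy hyy' hy'd => ?_⟩
  rw [hfF x' ⟨hax.trans hxx', hx'b⟩ y' ⟨hcy.trans hyy', hy'd⟩,
    hfF x ⟨hax, hxx'.trans hx'b⟩ y ⟨hcy, hyy'.trans hy'd⟩]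
  have hmx := kernelMass_le_mul_rpow_sub hp hp0 hα.le ha hax hxx'
  have hmy := kernelMass_le_mul_rpow_sub hq hq0 hβ.le hc hcy hyy'
  have hmb := kernelMass_le_kernelMass hp.le hα.le ha.le (hax.trans hxx') hx'b
  calc _ ≤ _ := abs_mixedKI_sub_le ha hc hp hq hα hα1 hβ hβ1 hF hFM hax hxx' hcy hyy' hy'd
    _ ≤ κp * (κq * (2 * M * (Lq * (y' - y) ^ β)) * kernelMass p α b a +
          2 * (κq * (M * kernelMass q β d c)) * (Lp * (x' - x) ^ α)) := by
      gcongr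
      exact kernelMass_nonneg hp.le hα.le ha.le (hax.trans hxx')
    _ = _ := by ring

end Katugampola

/-- Hölder condition of exponent `γ = min α β` for the mixed
Katugampola fractional integral of a continuous function. -/
theorem mixedKI_holder (a b c d p q α β : ℝ)
    (ha : 0 < a) (hab : a < b) (hc : 0 < c) (hcd : c < d)
    (hp : -1 < p) (hp0 : p ≤ 0) (hq : -1 < q) (hq0 : q ≤ 0)
    (hα : 0 < α) (hα1 : α < 1) (hβ : 0 < β) (hβ1 : β < 1)
    (f : ℝ → ℝ → ℝ)
    (hf : ContinuousOn (fun pt : ℝ × ℝ => f pt.1 pt.2) (Icc a b ×ˢ Icc c d)) :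
    ∃ C > 0, ∃ δ₀ > 0, ∀ x y h k : ℝ,
      x ∈ Icc a b → y ∈ Icc c d → x + h ∈ Icc a b → y + k ∈ Icc c d →
      0 ≤ h → 0 ≤ k → h ≤ δ₀ → k ≤ δ₀ →
      |mixedKI a c p q α β f (x + h) (y + k) - mixedKI a c p q α β f x y| ≤
        C * Real.sqrt (h ^ 2 + k ^ 2) ^ (min α β) := by
  obtain ⟨A, B, hA, hB, hAB⟩ := Katugampola.exists_abs_mixedKI_sub_le ha hab.le hc hcd.le
    (by linarith) hp0 (by linarith) hq0 hα hα1.le hβ hβ1.le hf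
  refine ⟨A + B + 1, by positivity, 1 / 2, by norm_num,
    fun x y h k hx hy hxh hyk h0 k0 hh hk => ?_⟩
  set ρ := √(h ^ 2 + k ^ 2)
  have hhρ : h ≤ ρ := le_sqrt_of_sq_le (by nlinarith)
  have hkρ : k ≤ ρ := le_sqrt_of_sq_le (by nlinarith)
  have hρ1 : ρ ≤ 1 := sqrt_le_one.2 (by nlinarith)
  have hγ : 0 ≤ min α β := le_min hα.le hβ.le
  have hργ : 0 ≤ ρ ^ min α β := rpow_nonneg (sqrt_nonneg _) _
  calc _ ≤ A * h ^ α + B * k ^ β := by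
        simpa using hAB x (x + h) y (y + k) hx.1 (by linarith) hxh.2 hy.1 (by linarith) hyk.2
    _ ≤ A * ρ ^ min α β + B * ρ ^ min α β := by
        gcongr
        · exact rpow_le_rpow_of_le_of_le_one h0 hhρ hρ1 hγ (min_le_left α β)
        · exact rpow_le_rpow_of_le_of_le_one k0 hkρ hρ1 hγ (min_le_right α β)
    _ ≤ (A + B + 1) * ρ ^ min α β := by nlinarith
end
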